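/- arXiv:2307.01169 — 11 statements merged into one kernel-verified Lean document; each statement's English description precedes it below -/
import Mathlib

section
/- Let f : ℝ^n → ℝ be differentiable and let α > 0. Then the steepest-descent problem in the 1-norm over the subspace of zero-sum directions admits a minimizer with exactly two non-zero coordinates; that is, min over d ∈ ℝ^n with ⟨d, 1⟩ = 0 of ∇f(x)ᵀd + (1/(2α))‖d‖₁² equals the minimum over all pairs of indices i, j of the minimum over d_{ij} ∈ ℝ² with d_i + d_j = 0 of ∇_{ij}f(x)ᵀd_{ij} + (1/(2α))‖d_{ij}‖₁². Moreover, a minimizer is given by d_i = δ, d_j = −δ, d_k = 0 for k ∉ {i, j}, where i maximizes ∇_i f(x), j minimizes ∇_j f(x), and δ = −(α/4)(∇_i f(x) − ∇_j f(x)). -/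
set_option maxHeartbeats 1000000 in
/-- Steepest descent in the 1-norm over zero-sum directions admits a
minimizer with (at most) two non-zero coordinates, given by the greedy 2-coordinate
update `d_i = δ`, `d_j = -δ` with `i ∈ argmax ∇f(x)`, `j ∈ argmin ∇f(x)` and
`δ = -(α/4)(∇_i f(x) - ∇_j f(x))`.  The vector `d` is feasible, it globally minimizes
the full steepest-descent objective, and its objective value is a lower bound for the
2-coordinate objectives over all pairs (hence the two minima coincide). -/
theorem stmt_0 {n : ℕ} (f : (Fin n → ℝ) → ℝ) (x : Fin n → ℝ)
    (hf : DifferentiableAt ℝ f x) (α : ℝ) (hα : 0 < α)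
    (g : Fin n → ℝ) (hg : ∀ i, g i = fderiv ℝ f x (Pi.single i 1))
    (i j : Fin n) (hi : ∀ k, g k ≤ g i) (hj : ∀ k, g j ≤ g k)
    (δ : ℝ) (hδ : δ = -(α / 4) * (g i - g j))
    (d : Fin n → ℝ) (hd : d = Pi.single i δ + Pi.single j (-δ)) :
    (∑ k, d k = 0) ∧
    (∀ e : Fin n → ℝ, ∑ k, e k = 0 →
      (∑ k, g k * d k) + 1 / (2 * α) * (∑ k, |d k|) ^ 2 ≤
        (∑ k, g k * e k) + 1 / (2 * α) * (∑ k, |e k|) ^ 2) ∧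
    (∀ i' j' : Fin n, i' ≠ j' → ∀ δ' : ℝ,
      (∑ k, g k * d k) + 1 / (2 * α) * (∑ k, |d k|) ^ 2 ≤
        g i' * δ' + g j' * (-δ') + 1 / (2 * α) * (|δ'| + |(-δ')|) ^ 2) := by
  set s : ℝ := g i - g j with hs_def
  have hs : 0 ≤ s := sub_nonneg.mpr (hj i)
  by_cases hij : i = j
  · -- degenerate case: all g equal, δ = 0, d = 0
    have hgall : ∀ k, g k = g i := fun k => le_antisymm (hi k) (hij ▸ hj k)
    have hs0 : s = 0 := by rw [hs_def, hij]; ring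
    have hδ0 : δ = 0 := by rw [hδ, hs0]; ring
    have hd0 : ∀ k, d k = 0 := by intro k; simp [hd, hδ0]
    have hds : ∑ k, d k = 0 := by simp [hd0]
    have h1 : ∑ k, g k * d k = 0 := by simp [hd0]
    have h2 : ∑ k, |d k| = 0 := by simp [hd0]
    refine ⟨hds, ?_, ?_⟩
    · intro e he
      have h3 : ∑ k, g k * e k = g i * ∑ k, e k := by
        rw [Finset.mul_sum]; exact Finset.sum_congr rfl fun k _ => by rw [hgall k]
      rw [h1, h2, h3, he]
      have : 0 ≤ 1 / (2 * α) * (∑ k, |e k|) ^ 2 := by positivity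
      nlinarith
    · intro i' j' _ δ'
      rw [h1, h2, hgall i', hgall j']
      have : 0 ≤ 1 / (2 * α) * (|δ'| + |(-δ')|) ^ 2 := by positivity
      nlinarith
  · -- main case
    have hdk : ∀ k, d k = if k = i then δ else if k = j then -δ else 0 := by
      intro k
      by_cases h1 : k = i <;> by_cases h2 : k = j <;>
        simp_all [hd, Pi.single_apply]
    have hsum1 : ∑ k, g k * d k = -(α / 8) * s ^ 2 - (α / 8) * s ^ 2 := by
      have : ∑ k, g k * d k = g i * δ + g j * (-δ) := by
        rw [hd]
        simp only [Pi.add_apply, Pi.single_apply, mul_add, Finset.sum_add_distrib,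
          mul_ite, mul_zero, Finset.sum_ite_eq', Finset.mem_univ, if_true]
      rw [this, hδ]; ring
    have habs : ∑ k, |d k| = |δ| + |δ| := by
      have h : ∀ k, |d k| = (if k = i then |δ| else 0) + (if k = j then |δ| else 0) := by
        intro k
        by_cases h1 : k = i
        · have h2 : k ≠ j := fun h2 => hij (h1.symm.trans h2)
          simp [hdk, h1, h2, hij]
        · have h3 : j ≠ i := fun h => hij h.symm
          by_cases h2 : k = j <;> simp [hdk, h1, h2, h3, abs_neg]
      simp only [h, Finset.sum_add_distrib, Finset.sum_ite_eq', Finset.mem_univ, if_true]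
    have hδabs : |δ| = (α / 4) * s := by
      rw [hδ, abs_mul, abs_neg, abs_of_nonneg (le_of_lt (by linarith : (0:ℝ) < α/4)),
        abs_of_nonneg hs]
    have hdval : (∑ k, g k * d k) + 1 / (2 * α) * (∑ k, |d k|) ^ 2 = -(α / 8) * s ^ 2 := by
      rw [hsum1, habs, hδabs]
      field_simp
      ring
    have hds : ∑ k, d k = 0 := by
      rw [hd]
      simp [Pi.single_apply, Finset.sum_add_distrib, Finset.sum_ite_eq']
    refine ⟨hds, ?_, ?_⟩
    · intro e he
      rw [hdval]
      set t : ℝ := ∑ k, |e k| with ht_def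
      have ht : 0 ≤ t := Finset.sum_nonneg fun k _ => abs_nonneg _
      have key : -(s / 2) * t ≤ ∑ k, g k * e k := by
        have h1 : ∑ k, g k * e k = ∑ k, (g k - (g i + g j) / 2) * e k := by
          simp only [sub_mul, Finset.sum_sub_distrib]
          rw [← Finset.mul_sum, he, mul_zero, sub_zero]
        rw [h1, ht_def, Finset.mul_sum]
        refine Finset.sum_le_sum fun k _ => ?_
        have hb : |g k - (g i + g j) / 2| ≤ s / 2 := by
          rw [abs_le]; constructor <;> [linarith [hj k]; linarith [hi k]]
        have hn : -|(g k - (g i + g j) / 2) * e k| ≤ (g k - (g i + g j) / 2) * e k :=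
          neg_abs_le _
        rw [abs_mul] at hn
        nlinarith [abs_nonneg (e k), abs_nonneg (g k - (g i + g j) / 2)]
      have hsq : 1 / (2 * α) * t ^ 2 - (s / 2) * t + (α / 8) * s ^ 2
          = 1 / (2 * α) * (t - α * s / 2) ^ 2 := by
        field_simp; ring
      have : 0 ≤ 1 / (2 * α) * (t - α * s / 2) ^ 2 := by positivity
      nlinarith
    · intro i' j' _ δ'
      rw [hdval]
      set t : ℝ := |δ'| with ht_def
      have ht : 0 ≤ t := abs_nonneg _
      have hb : |g i' - g j'| ≤ s := by
        rw [abs_le]; constructor <;> [linarith [hj i', hi j']; linarith [hi i', hj j']]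
      have key : -s * t ≤ g i' * δ' + g j' * (-δ') := by
        have h1 : g i' * δ' + g j' * (-δ') = (g i' - g j') * δ' := by ring
        have hn : -|(g i' - g j') * δ'| ≤ (g i' - g j') * δ' := neg_abs_le _
        rw [abs_mul] at hn
        rw [h1]
        nlinarith [abs_nonneg δ', abs_nonneg (g i' - g j')]
      have habs' : |(-δ')| = t := by rw [abs_neg]
      rw [habs']
      have hsq : 1 / (2 * α) * (t + t) ^ 2 - s * t + (α / 8) * s ^ 2
          = 2 / α * (t - α * s / 4) ^ 2 := by
        have hα' : α ≠ 0 := ne_of_gt hα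
        field_simp
        ring
      have : 0 ≤ 2 / α * (t - α * s / 4) ^ 2 := by positivity
      nlinarith
end

section
/- Let f : ℝ^n → ℝ be differentiable and α > 0. The pair (i, j) minimizing, over all two-element blocks b = {i, j}, the quantity min over d_b ∈ ℝ² with d_i + d_j = 0 of ⟨∇_b f(x), d_b⟩ + (1/(2α))‖d_b‖₂², is exactly a pair (i, j) maximizing |∇_i f(x) − ∇_j f(x)|; equivalently, it is given by i ∈ argmax_i ∇_i f(x) and j ∈ argmin_j ∇_j f(x). -/
lemma stmt_2_aux (α a b : ℝ) (hα : 0 < α) :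
    sInf {v | ∃ di dj : ℝ, di + dj = 0 ∧
      v = a * di + b * dj + 1 / (2 * α) * (di ^ 2 + dj ^ 2)}
    = -(α / 4) * (a - b) ^ 2 := by
  have hlb : ∀ v ∈ {v | ∃ di dj : ℝ, di + dj = 0 ∧
      v = a * di + b * dj + 1 / (2 * α) * (di ^ 2 + dj ^ 2)},
      -(α / 4) * (a - b) ^ 2 ≤ v := by
    rintro v ⟨di, dj, hsum, rfl⟩
    have hdj : dj = -di := by linarith
    subst hdj
    have hα' : α ≠ 0 := ne_of_gt hα
    have key : 0 ≤ (1 / α) * (di + α * (a - b) / 2) ^ 2 := by positivity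
    have expand : a * di + b * (-di) + 1 / (2 * α) * (di ^ 2 + (-di) ^ 2)
        + (α / 4) * (a - b) ^ 2 = (1 / α) * (di + α * (a - b) / 2) ^ 2 := by
      field_simp; ring
    linarith [key, expand]
  apply le_antisymm
  · apply csInf_le ⟨_, hlb⟩
    refine ⟨-(α * (a - b) / 2), α * (a - b) / 2, ?_, ?_⟩
    · ring
    · have hα' : α ≠ 0 := ne_of_gt hα
      field_simp
      ring
  · exact le_csInf ⟨a * 0 + b * 0 + 1 / (2 * α) * ((0:ℝ) ^ 2 + (0:ℝ) ^ 2), ⟨0, 0, by norm_num, rfl⟩⟩ hlb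

/-- The pair (i,j) minimizing, over two-element blocks, the minimum of the
2-coordinate quadratic model `⟨∇_b f(x), d_b⟩ + (1/(2α))‖d_b‖₂²` over zero-sum `d_b`
is exactly a pair maximizing `|∇_i f(x) - ∇_j f(x)|`; equivalently it is given by
`i ∈ argmax ∇f(x)`, `j ∈ argmin ∇f(x)`. -/
theorem stmt_2 {n : ℕ} (f : (Fin n → ℝ) → ℝ) (x : Fin n → ℝ)
    (hf : DifferentiableAt ℝ f x) (α : ℝ) (hα : 0 < α)
    (g : Fin n → ℝ) (hg : ∀ i, g i = fderiv ℝ f x (Pi.single i 1))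
    (V : Fin n → Fin n → ℝ)
    (hV : ∀ i j, V i j = sInf {v | ∃ di dj : ℝ, di + dj = 0 ∧
      v = g i * di + g j * dj + 1 / (2 * α) * (di ^ 2 + dj ^ 2)}) :
    (∀ i j : Fin n,
      (∀ i' j' : Fin n, V i j ≤ V i' j') ↔ (∀ i' j' : Fin n, |g i' - g j'| ≤ |g i - g j|)) ∧
    (∀ i j : Fin n, (∀ k, g k ≤ g i) → (∀ k, g j ≤ g k) →
      ∀ i' j' : Fin n, V i j ≤ V i' j') := by
  have hV' : ∀ i j, V i j = -(α / 4) * (g i - g j) ^ 2 := by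
    intro i j; rw [hV]; exact stmt_2_aux α (g i) (g j) hα
  have hiff : ∀ i j : Fin n,
      (∀ i' j' : Fin n, V i j ≤ V i' j') ↔ (∀ i' j' : Fin n, |g i' - g j'| ≤ |g i - g j|) := by
    intro i j
    constructor
    · intro h i' j'
      have hle := h i' j'
      rw [hV' i j, hV' i' j'] at hle
      have h2 : (g i' - g j') ^ 2 ≤ (g i - g j) ^ 2 := by nlinarith
      nlinarith [abs_nonneg (g i - g j), abs_nonneg (g i' - g j'),
        sq_abs (g i - g j), sq_abs (g i' - g j')]
    · intro h i' j'
      rw [hV' i j, hV' i' j']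
      have habs := h i' j'
      have h2 : (g i' - g j') ^ 2 ≤ (g i - g j) ^ 2 := by
        rw [← sq_abs, ← sq_abs (g i - g j)]
        exact pow_le_pow_left₀ (abs_nonneg _) habs 2
      nlinarith
  refine ⟨hiff, ?_⟩
  intro i j hmax hmin
  rw [hiff i j]
  intro a b
  have h3 : g j ≤ g i := hmin i
  rw [abs_sub_le_iff, abs_of_nonneg (by linarith : (0:ℝ) ≤ g i - g j)]
  exact ⟨by linarith [hmax a, hmin b], by linarith [hmax b, hmin a]⟩
end

section
/- Every extreme point of the polyhedron D = {d ∈ ℝ^n : ⟨d, 1⟩ = 0, ‖d‖₁ ≤ 1} has exactly two non-zero entries. -/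
/-!
If an extreme point `d` had two entries of the same sign, moving mass `t` from one to the other,
`d ± t (eᵢ - eⱼ)`, keeps both the coordinate sum and the `ℓ¹` norm, so `d` would be the midpoint
of two distinct points of `D`. Hence `d` has at most one positive and at most one negative entry.
It is not `0` (for `n ≥ 2`, `0` is the midpoint of `±(eᵢ - eⱼ)/4`), and a nonzero vector with
zero sum has entries of both signs, so exactly two entries are nonzero.
-/

open Finset

def zeroSumL1Ball (ι : Type*) [Fintype ι] : Set (ι → ℝ) :=
  {d | ∑ i, d i = 0 ∧ ∑ i, |d i| ≤ 1}

def IsMidpointExtreme {E : Type*} [AddCommGroup E] [Module ℝ E] (S : Set E) (x : E) : Prop :=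
  ∀ y ∈ S, ∀ z ∈ S, x = (1 / 2 : ℝ) • y + (1 / 2 : ℝ) • z → y = z

theorem IsMidpointExtreme.eq_zero_of_add_mem_of_sub_mem {E : Type*} [AddCommGroup E]
    [Module ℝ E] {S : Set E} {x w : E} (hx : IsMidpointExtreme S x)
    (h₁ : x + w ∈ S) (h₂ : x - w ∈ S) : w = 0 := by
  have h := hx _ h₁ _ h₂ (by module)
  have h2 : (2 : ℝ) • w = 0 := by
    rw [show (2 : ℝ) • w = (x + w) - (x - w) by module, h, sub_self]
  exact (smul_eq_zero.mp h2).resolve_left two_ne_zero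

theorem sum_add_eq_sum_add_of_eq_off_pair {ι M : Type*} [Fintype ι] [DecidableEq ι]
    [AddCommMonoid M] {f g : ι → M} {i j : ι} (hij : i ≠ j)
    (h : ∀ k, k ≠ i → k ≠ j → f k = g k) :
    ∑ k, f k + (g i + g j) = ∑ k, g k + (f i + f j) := by
  have hcompl : ∑ k ∈ {i, j}ᶜ, f k = ∑ k ∈ {i, j}ᶜ, g k :=
    sum_congr rfl fun k hk => by
      simp only [mem_compl, mem_insert, mem_singleton, not_or] at hk
      exact h k hk.1 hk.2
  rw [← sum_add_sum_compl {i, j} f, ← sum_add_sum_compl {i, j} g, sum_pair hij, sum_pair hij,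
    hcompl]
  abel

theorem abs_add_add_abs_sub_eq_of_mul_pos {a b t : ℝ} (hab : 0 < a * b) (ha : |t| ≤ |a|)
    (hb : |t| ≤ |b|) : |a + t| + |b - t| = |a| + |b| := by
  rw [abs_le] at ha hb
  rcases pos_and_pos_or_neg_and_neg_of_mul_pos hab with ⟨ha0, hb0⟩ | ⟨ha0, hb0⟩
  · rw [abs_of_pos ha0, abs_of_pos hb0] at *
    rw [abs_of_nonneg (by linarith), abs_of_nonneg (by linarith)]
    ring
  · rw [abs_of_neg ha0, abs_of_neg hb0] at *
    rw [abs_of_nonpos (by linarith), abs_of_nonpos (by linarith)]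
    ring

section Transfer

variable {ι : Type*} [DecidableEq ι] {d : ι → ℝ} {i j : ι}

theorem add_single_sub_single_apply_of_ne (t : ℝ) {k : ι} (hki : k ≠ i) (hkj : k ≠ j) :
    (d + (Pi.single i t - Pi.single j t) : ι → ℝ) k = d k := by
  simp [hki, hkj]

theorem add_single_sub_single_mem_zeroSumL1Ball [Fintype ι] (hd : ∑ k, d k = 0) (hij : i ≠ j)
    {t : ℝ}
    (ht : ∑ k, |d k| + (|d i + t| + |d j - t|) ≤ 1 + (|d i| + |d j|)) :
    d + (Pi.single i t - Pi.single j t) ∈ zeroSumL1Ball ι := by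
  set v : ι → ℝ := d + (Pi.single i t - Pi.single j t)
  have hoff : ∀ k, k ≠ i → k ≠ j → v k = d k := fun k => add_single_sub_single_apply_of_ne t
  have hi : v i = d i + t := by simp [v, hij]
  have hj : v j = d j - t := by simp [v, hij.symm, sub_eq_add_neg]
  constructor
  · have h := sum_add_eq_sum_add_of_eq_off_pair hij hoff
    rw [hi, hj, hd] at h
    linarith
  · have h := sum_add_eq_sum_add_of_eq_off_pair (f := fun k => |v k|) (g := fun k => |d k|) hij
      fun k hki hkj => by rw [hoff k hki hkj]
    simp only [hi, hj] at h
    linarith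

/-- `ht` says that moving any amount `s` with `|s| ≤ |t|` from coordinate `j` to coordinate `i`
keeps the `ℓ¹` norm at most `1`. -/
theorem IsMidpointExtreme.eq_zero_of_transfer_mem [Fintype ι]
    (hext : IsMidpointExtreme (zeroSumL1Ball ι) d) (hd : ∑ k, d k = 0) (hij : i ≠ j) {t : ℝ}
    (ht : ∀ s, |s| ≤ |t| → ∑ k, |d k| + (|d i + s| + |d j - s|) ≤ 1 + (|d i| + |d j|)) :
    t = 0 := by
  have h₁ := add_single_sub_single_mem_zeroSumL1Ball hd hij (ht t le_rfl)
  have h₂ := add_single_sub_single_mem_zeroSumL1Ball hd hij (ht (-t) (abs_neg t).le)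
  rw [Pi.single_neg, Pi.single_neg, neg_sub_neg, ← neg_sub, ← sub_eq_add_neg] at h₂
  have hw := congrFun (hext.eq_zero_of_add_mem_of_sub_mem h₁ h₂) i
  simpa [hij] using hw

theorem IsMidpointExtreme.mul_nonpos [Fintype ι] (hext : IsMidpointExtreme (zeroSumL1Ball ι) d)
    (hd : d ∈ zeroSumL1Ball ι) (hij : i ≠ j) : d i * d j ≤ 0 := by
  by_contra! hpos
  have hmin : min |d i| |d j| = 0 := by
    refine hext.eq_zero_of_transfer_mem hd.1 hij fun s hs => ?_
    rw [abs_of_nonneg (a := min |d i| |d j|) (le_min (abs_nonneg _) (abs_nonneg _))] at hs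
    rw [abs_add_add_abs_sub_eq_of_mul_pos hpos (hs.trans (min_le_left _ _))
      (hs.trans (min_le_right _ _))]
    linarith [hd.2]
  rcases min_eq_iff.mp hmin with ⟨h, -⟩ | ⟨h, -⟩ <;> simp [abs_eq_zero.mp h] at hpos

theorem IsMidpointExtreme.ne_zero [Fintype ι] [Nontrivial ι]
    (hext : IsMidpointExtreme (zeroSumL1Ball ι) d) : d ≠ 0 := by
  rintro rfl
  obtain ⟨i, j, hij⟩ := exists_pair_ne ι
  have h : (1 / 4 : ℝ) = 0 := by
    refine hext.eq_zero_of_transfer_mem (by simp) hij fun s hs => ?_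
    simp only [Pi.zero_apply, abs_zero, sum_const_zero, zero_add, zero_sub, abs_neg]
    rw [abs_of_pos (by norm_num : (0 : ℝ) < 1 / 4)] at hs
    linarith
  norm_num at h

end Transfer

theorem exists_neg_of_sum_eq_zero {ι : Type*} [Fintype ι] {d : ι → ℝ} (hd : ∑ i, d i = 0)
    (hne : d ≠ 0) : ∃ i, d i < 0 := by
  obtain ⟨i, -, hi⟩ := exists_pos_of_sum_zero_of_exists_nonzero (s := univ) (-d) (by simp [hd])
    (by simpa [funext_iff] using hne)
  exact ⟨i, by simpa using hi⟩

/-- Every extreme point of `D = {d : ⟨d,1⟩ = 0, ‖d‖₁ ≤ 1}` (a point of `D`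
that cannot be written as `(1/2)d' + (1/2)d''` with `d' ≠ d''` both in `D`) has exactly
two non-zero entries (for `n ≥ 2`). -/
theorem stmt_3 {n : ℕ} (hn : 2 ≤ n) (d : Fin n → ℝ)
    (hd : ∑ i, d i = 0 ∧ ∑ i, |d i| ≤ 1)
    (hext : ∀ d' d'' : Fin n → ℝ,
      (∑ i, d' i = 0 ∧ ∑ i, |d' i| ≤ 1) → (∑ i, d'' i = 0 ∧ ∑ i, |d'' i| ≤ 1) →
      d = (1 / 2 : ℝ) • d' + (1 / 2 : ℝ) • d'' → d' = d'') :
    {i | d i ≠ 0}.ncard = 2 := by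
  have hS : IsMidpointExtreme (zeroSumL1Ball (Fin n)) d := fun y hy z hz => hext y z hy hz
  have : Nontrivial (Fin n) := Fin.nontrivial_iff_two_le.mpr hn
  obtain ⟨p, -, hp⟩ := exists_pos_of_sum_zero_of_exists_nonzero (s := univ) d hd.1
    (by simpa [funext_iff] using hS.ne_zero)
  obtain ⟨q, hq⟩ := exists_neg_of_sum_eq_zero hd.1 hS.ne_zero
  have hpos : ∀ k, 0 < d k → k = p := fun k hk => by
    by_contra hkp
    exact (hS.mul_nonpos hd hkp).not_gt (mul_pos hk hp)
  have hneg : ∀ k, d k < 0 → k = q := fun k hk => by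
    by_contra hkq
    exact (hS.mul_nonpos hd hkq).not_gt (mul_pos_of_neg_of_neg hk hq)
  have hsupp : {i | d i ≠ 0} = {p, q} := by
    ext k
    simp only [Set.mem_ofPred_eq, Set.mem_insert_iff, Set.mem_singleton_iff]
    refine ⟨fun hk => hk.lt_or_gt.elim (Or.inr ∘ hneg k) (Or.inl ∘ hpos k), ?_⟩
    rintro (rfl | rfl)
    exacts [hp.ne', hq.ne]
  rw [hsupp, Set.ncard_pair]
  rintro rfl
  exact hp.not_gt hq
end

section
/- Suppose F(x) = f(x) + g(x), with f differentiable and g convex, satisfies the proximal-PL inequality in the 2-norm with constants L₂ and μ₂, i.e. for all x, F(x) − F* ≤ −(L₂/μ₂)·min over y of {⟨∇f(x), y − x⟩ + (L₂/2)‖y − x‖₂² + g(y) − g(x)}, where F* is the minimum of F. If L₁ is a constant with L₂/n ≤ L₁ ≤ L₂, then F also satisfies the proximal-PL inequality in the 1-norm with constant μ₁ = μ₂/n: for all x, F(x) − F* ≤ −(L₁ n/μ₂)·min over y of {⟨∇f(x), y − x⟩ + (L₁/2)‖y − x‖₁² + g(y) − g(x)}. -/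
/-- Scaling lemma: moving from `y` towards `x` by factor `t ∈ [0,1]` scales the
linear and convex parts by at least `t`. -/
lemma stmt7_scale_aux {n : ℕ} {g : (Fin n → ℝ) → ℝ} (hg : ConvexOn ℝ Set.univ g)
    (φ : (Fin n → ℝ) →L[ℝ] ℝ) (x y : Fin n → ℝ) (t A B : ℝ)
    (ht0 : 0 ≤ t) (ht1 : t ≤ 1) (hAB : t * A ≤ B) :
    φ ((x + t • (y - x)) - x) + t ^ 2 * A + g (x + t • (y - x)) - g x
      ≤ t * (φ (y - x) + B + g y - g x) := by
  have hcomb : (1 - t) • x + t • y = x + t • (y - x) := by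
    funext i
    simp only [Pi.add_apply, Pi.smul_apply, Pi.sub_apply, smul_eq_mul]
    ring
  have h1 : g (x + t • (y - x)) ≤ (1 - t) * g x + t * g y := by
    have ha : (0:ℝ) ≤ 1 - t := by linarith
    have hab : (1 - t) + t = 1 := by ring
    have := hg.2 (Set.mem_univ x) (Set.mem_univ y) ha ht0 hab
    rw [hcomb] at this
    simpa [smul_eq_mul] using this
  have h2 : φ ((x + t • (y - x)) - x) = t * φ (y - x) := by
    rw [add_sub_cancel_left, map_smul, smul_eq_mul]
  have h3 : t * (t * A) ≤ t * B := mul_le_mul_of_nonneg_left hAB ht0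
  rw [h2]
  nlinarith [h1, h3]

set_option maxHeartbeats 1000000 in
/-- If `F = f + g` (with `f` differentiable, `g` convex) satisfies the
proximal-PL inequality in the 2-norm with constants `L₂, μ₂`, and `L₂/n ≤ L₁ ≤ L₂`,
then `F` satisfies the proximal-PL inequality in the 1-norm with constant `μ₁ = μ₂/n`,
i.e. `F(x) − F* ≤ −(L₁ n/μ₂)·min_y {⟨∇f(x), y−x⟩ + (L₁/2)‖y−x‖₁² + g(y) − g(x)}`. -/
theorem stmt_7 {n : ℕ} (hn : 0 < n) (f g : (Fin n → ℝ) → ℝ)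
    (hf : Differentiable ℝ f) (hg : ConvexOn ℝ Set.univ g)
    (F : (Fin n → ℝ) → ℝ) (hF : F = fun x => f x + g x)
    (Fstar : ℝ) (hFstar : IsGLB (Set.range F) Fstar)
    (L₂ μ₂ L₁ : ℝ) (hL₂ : 0 < L₂) (hμ₂ : 0 < μ₂)
    (hL₁l : L₂ / n ≤ L₁) (hL₁u : L₁ ≤ L₂)
    (hPL : ∀ x : Fin n → ℝ, F x - Fstar ≤ -(L₂ / μ₂) * sInf {v | ∃ y : Fin n → ℝ,
      v = fderiv ℝ f x (y - x) + L₂ / 2 * (∑ i, (y i - x i) ^ 2) + g y - g x}) :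
    ∀ x : Fin n → ℝ, F x - Fstar ≤ -(L₁ * n / μ₂) * sInf {v | ∃ y : Fin n → ℝ,
      v = fderiv ℝ f x (y - x) + L₁ / 2 * (∑ i, |y i - x i|) ^ 2 + g y - g x} := by
  intro x
  have hn' : (0:ℝ) < n := by exact_mod_cast hn
  have hL₂n : 0 < L₂ / n := div_pos hL₂ hn'
  have hL₁ : 0 < L₁ := lt_of_lt_of_le hL₂n hL₁l
  set φ : (Fin n → ℝ) →L[ℝ] ℝ := fderiv ℝ f x with hφ
  set S1 : Set ℝ := {v | ∃ y : Fin n → ℝ,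
      v = φ (y - x) + L₁ / 2 * (∑ i, |y i - x i|) ^ 2 + g y - g x} with hS1
  set S2 : Set ℝ := {v | ∃ y : Fin n → ℝ,
      v = φ (y - x) + L₂ / 2 * (∑ i, (y i - x i) ^ 2) + g y - g x} with hS2
  set S0 : Set ℝ := {v | ∃ y : Fin n → ℝ,
      v = φ (y - x) + (L₂ / n) / 2 * (∑ i, |y i - x i|) ^ 2 + g y - g x} with hS0
  have h1ne : (0:ℝ) ∈ S1 := ⟨x, by simp⟩
  have h0ne : (0:ℝ) ∈ S0 := ⟨x, by simp⟩
  have h2ne : (0:ℝ) ∈ S2 := ⟨x, by simp⟩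
  -- norm comparison facts
  have hnorm1 : ∀ y : Fin n → ℝ, ∑ i, (y i - x i) ^ 2 ≤ (∑ i, |y i - x i|) ^ 2 := by
    intro y
    calc ∑ i, (y i - x i) ^ 2 = ∑ i, |y i - x i| ^ 2 := by simp [sq_abs]
      _ ≤ (∑ i, |y i - x i|) ^ 2 :=
        Finset.sum_sq_le_sq_sum_of_nonneg (fun i _ => abs_nonneg _)
  have hnorm2 : ∀ y : Fin n → ℝ, (∑ i, |y i - x i|) ^ 2 ≤ n * ∑ i, (y i - x i) ^ 2 := by
    intro y
    calc (∑ i, |y i - x i|) ^ 2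
        ≤ ((Finset.univ : Finset (Fin n)).card : ℝ) * ∑ i, |y i - x i| ^ 2 :=
        sq_sum_le_card_mul_sum_sq
      _ = n * ∑ i, (y i - x i) ^ 2 := by simp [sq_abs]
  -- sums at scaled points
  have hsum1 : ∀ (t : ℝ), 0 ≤ t → ∀ y : Fin n → ℝ,
      (∑ i, |(x + t • (y - x)) i - x i|) ^ 2 = t ^ 2 * (∑ i, |y i - x i|) ^ 2 := by
    intro t ht y
    have h : ∀ i : Fin n, |(x + t • (y - x)) i - x i| = t * |y i - x i| := by
      intro i
      simp only [Pi.add_apply, Pi.smul_apply, Pi.sub_apply, smul_eq_mul]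
      rw [add_sub_cancel_left (x i), abs_mul, abs_of_nonneg ht]
    rw [Finset.sum_congr rfl (fun i _ => h i), ← Finset.mul_sum]
    ring
  have hsum2 : ∀ (t : ℝ) (y : Fin n → ℝ),
      (∑ i, ((x + t • (y - x)) i - x i) ^ 2) = t ^ 2 * (∑ i, (y i - x i) ^ 2) := by
    intro t y
    rw [Finset.mul_sum]
    refine Finset.sum_congr rfl fun i _ => ?_
    simp only [Pi.add_apply, Pi.smul_apply, Pi.sub_apply, smul_eq_mul]
    rw [add_sub_cancel_left (x i)]
    ring
  -- key 1 : from S0 elements, get S1 elements (monotonicity scaling, t = (L₂/n)/L₁)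
  have key01 : ∀ a ∈ S0, ∃ b ∈ S1, b ≤ ((L₂ / n) / L₁) * a := by
    rintro a ⟨y, rfl⟩
    set t : ℝ := (L₂ / n) / L₁ with htdef
    have ht0 : 0 ≤ t := le_of_lt (div_pos hL₂n hL₁)
    have ht1 : t ≤ 1 := (div_le_one hL₁).2 hL₁l
    refine ⟨_, ⟨x + t • (y - x), rfl⟩, ?_⟩
    have hAB : t * (L₁ / 2 * (∑ i, |y i - x i|) ^ 2)
        ≤ (L₂ / n) / 2 * (∑ i, |y i - x i|) ^ 2 := by
      have h : t * L₁ = L₂ / n := div_mul_cancel₀ _ (ne_of_gt hL₁)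
      nlinarith [sq_nonneg (∑ i, |y i - x i|)]
    have h := stmt7_scale_aux hg φ x y t (L₁ / 2 * (∑ i, |y i - x i|) ^ 2)
      ((L₂ / n) / 2 * (∑ i, |y i - x i|) ^ 2) ht0 ht1 hAB
    calc φ ((x + t • (y - x)) - x) + L₁ / 2 * (∑ i, |(x + t • (y - x)) i - x i|) ^ 2
          + g (x + t • (y - x)) - g x
        = φ ((x + t • (y - x)) - x) + t ^ 2 * (L₁ / 2 * (∑ i, |y i - x i|) ^ 2)
          + g (x + t • (y - x)) - g x := by rw [hsum1 t ht0 y]; ring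
      _ ≤ t * (φ (y - x) + (L₂ / n) / 2 * (∑ i, |y i - x i|) ^ 2 + g y - g x) := h
  -- key 2 : from S1 elements, get S2 elements (t = L₁/L₂)
  have key12 : ∀ a ∈ S1, ∃ b ∈ S2, b ≤ (L₁ / L₂) * a := by
    rintro a ⟨y, rfl⟩
    set t : ℝ := L₁ / L₂ with htdef
    have ht0 : 0 ≤ t := le_of_lt (div_pos hL₁ hL₂)
    have ht1 : t ≤ 1 := (div_le_one hL₂).2 hL₁u
    refine ⟨_, ⟨x + t • (y - x), rfl⟩, ?_⟩
    have hAB : t * (L₂ / 2 * (∑ i, (y i - x i) ^ 2))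
        ≤ L₁ / 2 * (∑ i, |y i - x i|) ^ 2 := by
      have h : t * L₂ = L₁ := div_mul_cancel₀ _ (ne_of_gt hL₂)
      nlinarith [hnorm1 y, hL₁.le]
    have h := stmt7_scale_aux hg φ x y t (L₂ / 2 * (∑ i, (y i - x i) ^ 2))
      (L₁ / 2 * (∑ i, |y i - x i|) ^ 2) ht0 ht1 hAB
    calc φ ((x + t • (y - x)) - x) + L₂ / 2 * (∑ i, ((x + t • (y - x)) i - x i) ^ 2)
          + g (x + t • (y - x)) - g x
        = φ ((x + t • (y - x)) - x) + t ^ 2 * (L₂ / 2 * (∑ i, (y i - x i) ^ 2))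
          + g (x + t • (y - x)) - g x := by rw [hsum2 t y]; ring
      _ ≤ t * (φ (y - x) + L₁ / 2 * (∑ i, |y i - x i|) ^ 2 + g y - g x) := h
  -- pointwise : S2 elements dominate corresponding S0 elements
  have key20 : ∀ a ∈ S2, ∃ b ∈ S0, b ≤ a := by
    rintro a ⟨y, rfl⟩
    refine ⟨_, ⟨y, rfl⟩, ?_⟩
    have h := hnorm2 y
    have : (L₂ / n) / 2 * (∑ i, |y i - x i|) ^ 2 ≤ L₂ / 2 * (∑ i, (y i - x i) ^ 2) := by
      rw [div_div, div_mul_eq_mul_div, div_le_iff₀ (by positivity)]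
      nlinarith [hL₂.le]
    linarith
  have hPLx := hPL x
  rw [show {v | ∃ y : Fin n → ℝ,
      v = fderiv ℝ f x (y - x) + L₂ / 2 * (∑ i, (y i - x i) ^ 2) + g y - g x} = S2 from rfl]
    at hPLx
  by_cases hb : BddBelow S1
  · -- main case: all infima are genuine
    have hm1 : sInf S1 ≤ 0 := csInf_le hb h1ne
    have hb0 : BddBelow S0 := by
      refine ⟨(sInf S1) / ((L₂ / n) / L₁), fun a ha => ?_⟩
      obtain ⟨b, hbS, hba⟩ := key01 a ha
      have hs : sInf S1 ≤ ((L₂ / n) / L₁) * a := le_trans (csInf_le hb hbS) hba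
      rw [div_le_iff₀ (div_pos hL₂n hL₁)]
      linarith [hs, mul_comm a ((L₂ / n) / L₁)]
    have hb2 : BddBelow S2 := by
      obtain ⟨m, hm⟩ := hb0
      refine ⟨m, fun a ha => ?_⟩
      obtain ⟨b, hbS, hba⟩ := key20 a ha
      exact le_trans (hm hbS) hba
    -- monotonicity: L₁ * sInf S1 ≤ (L₂/n) * sInf S0
    have hmono : L₁ * sInf S1 ≤ (L₂ / n) * sInf S0 := by
      have hlb : ∀ a ∈ S0, sInf S1 / ((L₂ / n) / L₁) ≤ a := by
        intro a ha
        obtain ⟨b, hbS, hba⟩ := key01 a ha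
        have hs : sInf S1 ≤ ((L₂ / n) / L₁) * a := le_trans (csInf_le hb hbS) hba
        rw [div_le_iff₀ (div_pos hL₂n hL₁)]
        linarith [mul_comm a ((L₂ / n) / L₁)]
      have h := le_csInf ⟨0, h0ne⟩ hlb
      rw [div_le_iff₀ (div_pos hL₂n hL₁)] at h
      calc L₁ * sInf S1 = (sInf S0 * (L₂ / n / L₁)) * L₁ -
            ((sInf S0 * (L₂ / n / L₁)) * L₁ - L₁ * sInf S1) := by ring
        _ ≤ (L₂ / n) * sInf S0 := by
          have : L₁ * sInf S1 ≤ L₁ * (sInf S0 * (L₂ / n / L₁)) :=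
            mul_le_mul_of_nonneg_left h hL₁.le
          have hc : (sInf S0 * (L₂ / n / L₁)) * L₁ = (L₂ / n) * sInf S0 := by
            field_simp
          linarith [this, hc]
    have h02 : sInf S0 ≤ sInf S2 := by
      refine le_csInf ⟨0, h2ne⟩ (fun a ha => ?_)
      obtain ⟨b, hbS, hba⟩ := key20 a ha
      exact le_trans (csInf_le hb0 hbS) hba
    -- combine
    have hfinal : L₁ * (n : ℝ) * sInf S1 ≤ L₂ * sInf S2 := by
      have h1 : (n : ℝ) * (L₁ * sInf S1) ≤ (n : ℝ) * ((L₂ / n) * sInf S0) :=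
        mul_le_mul_of_nonneg_left hmono hn'.le
      have h2 : (n : ℝ) * ((L₂ / n) * sInf S0) = L₂ * sInf S0 := by
        field_simp
      have h3 : L₂ * sInf S0 ≤ L₂ * sInf S2 := mul_le_mul_of_nonneg_left h02 hL₂.le
      rw [h2] at h1
      linarith [h1, h3]
    have hstep : -(L₂ / μ₂) * sInf S2 ≤ -(L₁ * n / μ₂) * sInf S1 := by
      rw [neg_mul, neg_mul, neg_le_neg_iff, div_mul_eq_mul_div, div_mul_eq_mul_div]
      exact (div_le_div_iff_of_pos_right hμ₂).2 hfinal
    exact le_trans hPLx hstep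
  · -- S1 unbounded below: then S2 is unbounded below too, both sInf are 0
    have hs1 : sInf S1 = 0 := Real.sInf_of_not_bddBelow hb
    have hb2 : ¬ BddBelow S2 := by
      intro ⟨m, hm⟩
      apply hb
      refine ⟨m / (L₁ / L₂), fun a ha => ?_⟩
      obtain ⟨b, hbS, hba⟩ := key12 a ha
      have : m ≤ (L₁ / L₂) * a := le_trans (hm hbS) hba
      rw [div_le_iff₀ (div_pos hL₁ hL₂)]
      linarith [mul_comm a (L₁ / L₂)]
    have hs2 : sInf S2 = 0 := Real.sInf_of_not_bddBelow hb2
    rw [hs2, mul_zero] at hPLx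
    rw [hs1, mul_zero]
    exact hPLx
end

section
/- Suppose F(x) = f(x) + g(x), with f differentiable and g convex, satisfies the proximal-PL inequality in the 1-norm with constants L₁ and μ₁, i.e. for all x, F(x) − F* ≤ −(L₁/μ₁)·min over y of {⟨∇f(x), y − x⟩ + (L₁/2)‖y − x‖₁² + g(y) − g(x)}. If L₂ is a constant with L₁ ≤ L₂, then F satisfies the proximal-PL inequality in the 2-norm with constant μ₂ = μ₁: for all x, F(x) − F* ≤ −(L₂/μ₁)·min over y of {⟨∇f(x), y − x⟩ + (L₂/2)‖y − x‖₂² + g(y) − g(x)}. -/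
lemma convex_shrink {n : ℕ} (g : (Fin n → ℝ) → ℝ) (hg : ConvexOn ℝ Set.univ g)
    (x y : Fin n → ℝ) {t : ℝ} (ht0 : 0 ≤ t) (ht1 : t ≤ 1) :
    g (x + t • (y - x)) - g x ≤ t * (g y - g x) := by
  have hxy : x + t • (y - x) = (1 - t) • x + t • y := by module
  have := hg.2 (Set.mem_univ x) (Set.mem_univ y) (by linarith : (0:ℝ) ≤ 1 - t) ht0 (by ring)
  rw [← hxy] at this
  simp only [smul_eq_mul] at this
  nlinarith

set_option maxHeartbeats 1000000 in
/-- If `F = f + g` (with `f` differentiable, `g` convex) satisfies the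
proximal-PL inequality in the 1-norm with constants `L₁, μ₁`, and `L₁ ≤ L₂`, then `F`
satisfies the proximal-PL inequality in the 2-norm with constant `μ₂ = μ₁`:
`F(x) − F* ≤ −(L₂/μ₁)·min_y {⟨∇f(x), y−x⟩ + (L₂/2)‖y−x‖₂² + g(y) − g(x)}`. -/
theorem stmt_8 {n : ℕ} (f g : (Fin n → ℝ) → ℝ)
    (hf : Differentiable ℝ f) (hg : ConvexOn ℝ Set.univ g)
    (F : (Fin n → ℝ) → ℝ) (hF : F = fun x => f x + g x)
    (Fstar : ℝ) (hFstar : IsGLB (Set.range F) Fstar)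
    (L₁ μ₁ L₂ : ℝ) (hL₁ : 0 < L₁) (hμ₁ : 0 < μ₁) (hL₁₂ : L₁ ≤ L₂)
    (hPL : ∀ x : Fin n → ℝ, F x - Fstar ≤ -(L₁ / μ₁) * sInf {v | ∃ y : Fin n → ℝ,
      v = fderiv ℝ f x (y - x) + L₁ / 2 * (∑ i, |y i - x i|) ^ 2 + g y - g x}) :
    ∀ x : Fin n → ℝ, F x - Fstar ≤ -(L₂ / μ₁) * sInf {v | ∃ y : Fin n → ℝ,
      v = fderiv ℝ f x (y - x) + L₂ / 2 * (∑ i, (y i - x i) ^ 2) + g y - g x} := by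
  intro x
  have hL₂ : (0:ℝ) < L₂ := lt_of_lt_of_le hL₁ hL₁₂
  set D : (Fin n → ℝ) →L[ℝ] ℝ := fderiv ℝ f x with hDdef
  set S₁ : Set ℝ := {v | ∃ y : Fin n → ℝ,
      v = D (y - x) + L₁ / 2 * (∑ i, |y i - x i|) ^ 2 + g y - g x} with hS₁def
  set S₂ : Set ℝ := {v | ∃ y : Fin n → ℝ,
      v = D (y - x) + L₂ / 2 * (∑ i, (y i - x i) ^ 2) + g y - g x} with hS₂def
  have h1 : F x - Fstar ≤ -(L₁ / μ₁) * sInf S₁ := hPL x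
  show F x - Fstar ≤ -(L₂ / μ₁) * sInf S₂
  -- basic membership
  have mem0₁ : (0:ℝ) ∈ S₁ := ⟨x, by simp⟩
  have mem0₂ : (0:ℝ) ∈ S₂ := ⟨x, by simp⟩
  -- algebraic facts about scaling
  have hDscale : ∀ (t : ℝ) (y : Fin n → ℝ),
      D ((x + t • (y - x)) - x) = t * D (y - x) := by
    intro t y
    rw [add_sub_cancel_left, map_smul, smul_eq_mul]
  have hsq : ∀ (t : ℝ) (y : Fin n → ℝ),
      ∑ i, ((x + t • (y - x)) i - x i) ^ 2 = t ^ 2 * ∑ i, (y i - x i) ^ 2 := by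
    intro t y
    rw [Finset.mul_sum]
    refine Finset.sum_congr rfl fun i _ => ?_
    simp only [Pi.add_apply, Pi.smul_apply, Pi.sub_apply, smul_eq_mul]
    ring
  have habs : ∀ (t : ℝ), 0 ≤ t → ∀ (y : Fin n → ℝ),
      ∑ i, |(x + t • (y - x)) i - x i| = t * ∑ i, |y i - x i| := by
    intro t ht y
    rw [Finset.mul_sum]
    refine Finset.sum_congr rfl fun i _ => ?_
    simp only [Pi.add_apply, Pi.smul_apply, Pi.sub_apply, smul_eq_mul]
    rw [show x i + t * (y i - x i) - x i = t * (y i - x i) by ring, abs_mul,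
      abs_of_nonneg ht]
  have hsum_le : ∀ y : Fin n → ℝ, ∑ i, (y i - x i) ^ 2 ≤ (∑ i, |y i - x i|) ^ 2 := by
    intro y
    calc ∑ i, (y i - x i) ^ 2 = ∑ i, |y i - x i| ^ 2 := by simp [sq_abs]
      _ ≤ (∑ i, |y i - x i|) ^ 2 :=
        Finset.sum_sq_le_sq_sum_of_nonneg (fun i _ => abs_nonneg _)
  have hsum_ge : ∀ y : Fin n → ℝ,
      (∑ i, |y i - x i|) ^ 2 ≤ (n : ℝ) * ∑ i, (y i - x i) ^ 2 := by
    intro y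
    have := Finset.sum_mul_sq_le_sq_mul_sq Finset.univ (fun _ : Fin n => (1:ℝ))
      (fun i => |y i - x i|)
    simpa [sq_abs] using this
  by_cases hbdd₁ : BddBelow S₁
  · -- S₂ is bounded below
    obtain ⟨B, hB⟩ := hbdd₁
    set t : ℝ := min 1 (L₂ / (L₁ * (n + 1))) with htdef
    have ht0 : 0 < t := lt_min one_pos (div_pos hL₂ (by positivity))
    have ht1 : t ≤ 1 := min_le_left _ _
    have htn : L₁ * t * (n + 1) ≤ L₂ := by
      have : t ≤ L₂ / (L₁ * (n + 1)) := min_le_right _ _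
      rw [le_div_iff₀ (by positivity)] at this
      nlinarith
    have hbdd₂ : BddBelow S₂ := by
      refine ⟨B / t, fun w hw => ?_⟩
      obtain ⟨y, rfl⟩ := hw
      rw [div_le_iff₀ ht0]
      have hmem : D ((x + t • (y - x)) - x)
          + L₁ / 2 * (∑ i, |(x + t • (y - x)) i - x i|) ^ 2
          + g (x + t • (y - x)) - g x ∈ S₁ := ⟨_, rfl⟩
      have hBle := hB hmem
      rw [hDscale, habs t ht0.le] at hBle
      have hconv := convex_shrink g hg x y ht0.le ht1
      have h12 : (∑ i, |y i - x i|) ^ 2 ≤ (n + 1 : ℝ) * ∑ i, (y i - x i) ^ 2 := by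
        have := hsum_ge y
        have hnn : (0:ℝ) ≤ ∑ i, (y i - x i) ^ 2 :=
          Finset.sum_nonneg fun i _ => sq_nonneg _
        linarith
      set A := ∑ i, |y i - x i| with hA
      set Q := ∑ i, (y i - x i) ^ 2 with hQ
      have hQnn : (0:ℝ) ≤ Q := Finset.sum_nonneg fun i _ => sq_nonneg _
      have s1 : L₁ * t ^ 2 * A ^ 2 ≤ L₁ * t ^ 2 * ((n + 1 : ℝ) * Q) :=
        mul_le_mul_of_nonneg_left h12 (by positivity)
      have s2 : L₁ * t * (n + 1 : ℝ) * (t * Q) ≤ L₂ * (t * Q) :=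
        mul_le_mul_of_nonneg_right htn (mul_nonneg ht0.le hQnn)
      linarith [hBle, hconv, s1, s2]
    -- key inequality: sInf S₂ ≤ (L₁/L₂) * w for all w ∈ S₁
    set t' : ℝ := L₁ / L₂ with ht'def
    have ht'0 : 0 < t' := div_pos hL₁ hL₂
    have ht'1 : t' ≤ 1 := (div_le_one hL₂).mpr hL₁₂
    have key : ∀ w ∈ S₁, sInf S₂ ≤ t' * w := by
      rintro w ⟨y, rfl⟩
      have hmem : D ((x + t' • (y - x)) - x)
          + L₂ / 2 * (∑ i, ((x + t' • (y - x)) i - x i) ^ 2)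
          + g (x + t' • (y - x)) - g x ∈ S₂ := ⟨_, rfl⟩
      have hle := csInf_le hbdd₂ hmem
      rw [hDscale, hsq] at hle
      have hconv := convex_shrink g hg x y ht'0.le ht'1
      set A := ∑ i, |y i - x i| with hA
      set Q := ∑ i, (y i - x i) ^ 2 with hQ
      have e : L₂ / 2 * (t' ^ 2 * Q) = t' * (L₁ / 2 * Q) := by
        rw [ht'def]; field_simp
      have s1 : t' * (L₁ / 2 * Q) ≤ t' * (L₁ / 2 * A ^ 2) := by
        have := hsum_le y
        have h0 : (0:ℝ) ≤ t' * (L₁ / 2) := by positivity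
        linarith [mul_le_mul_of_nonneg_left this h0]
      linarith [hle, hconv, s1, e]
    have hkey2 : L₂ * sInf S₂ ≤ L₁ * sInf S₁ := by
      have h3 : sInf S₂ / t' ≤ sInf S₁ :=
        le_csInf ⟨0, mem0₁⟩ fun w hw => (div_le_iff₀ ht'0).mpr
          (by have := key w hw; linarith [mul_comm t' w])
      have h4 : sInf S₂ ≤ sInf S₁ * t' := (div_le_iff₀ ht'0).mp h3
      have h5 : L₂ * sInf S₂ ≤ L₂ * (sInf S₁ * t') :=
        mul_le_mul_of_nonneg_left h4 hL₂.le
      have h6 : L₂ * (sInf S₁ * t') = L₁ * sInf S₁ := by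
        rw [ht'def]; field_simp
      linarith
    have e1 : -(L₂ / μ₁) * sInf S₂ = -((L₂ * sInf S₂) / μ₁) := by ring
    have e2 : -(L₁ / μ₁) * sInf S₁ = -((L₁ * sInf S₁) / μ₁) := by ring
    rw [e1]
    rw [e2] at h1
    have h5 : (0:ℝ) ≤ (L₁ * sInf S₁ - L₂ * sInf S₂) / μ₁ :=
      div_nonneg (by linarith) hμ₁.le
    have e3 : (L₁ * sInf S₁ - L₂ * sInf S₂) / μ₁
        = -((L₂ * sInf S₂) / μ₁) - -((L₁ * sInf S₁) / μ₁) := by ring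
    linarith
  · -- S₁ unbounded below
    rw [Real.sInf_of_not_bddBelow hbdd₁] at h1
    have hS₂le : sInf S₂ ≤ 0 := by
      by_cases hbdd₂ : BddBelow S₂
      · exact csInf_le hbdd₂ mem0₂
      · rw [Real.sInf_of_not_bddBelow hbdd₂]
    nlinarith [div_pos hL₂ hμ₁]
end

section
/- Let A be an m × n real matrix and let d be an elementary vector of Null(A), the null space of A. Then supp(d) ≤ rank(A) + 1. -/
/-!
Subtracting from `d` the right multiple `t • d'` of a nonzero vector `d'` of the subspace with
support inside `supp d` kills one more coordinate without changing any sign, so an elementary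
vector has inclusion-minimal support among *all* nonzero vectors of the subspace, conformal or
not. If `supp d` had more than `rank A + 1` elements, drop one index `i₀` from it: the vectors
supported on the remaining coordinates form a space of dimension `> rank A`, so one of them is a
nonzero null vector of `A`, and its support is strictly smaller than `supp d`.
-/

/-- `d'` is conformal to `d`: the support of `d'` is contained in the support of `d`
and `d_i d'_i ≥ 0` for every coordinate `i`. -/
def IsConformal {n : ℕ} (d' d : Fin n → ℝ) : Prop :=
  {i | d' i ≠ 0} ⊆ {i | d i ≠ 0} ∧ ∀ i, 0 ≤ d i * d' i

/-- `d` is an elementary vector of the subspace `S`. -/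
def IsElementary {n : ℕ} (S : Submodule ℝ (Fin n → ℝ)) (d : Fin n → ℝ) : Prop :=
  d ∈ S ∧ d ≠ 0 ∧
    ¬∃ d' : Fin n → ℝ, d' ∈ S ∧ d' ≠ 0 ∧ IsConformal d' d ∧ {i | d' i ≠ 0} ⊂ {i | d i ≠ 0}

open Function Module

theorem LinearMap.exists_ne_zero_mem_ker_support_subset {K ι M : Type*} [Field K] [Fintype ι]
    [AddCommGroup M] [Module K M] (f : (ι → K) →ₗ[K] M) (T : Finset ι)
    (hT : finrank K (LinearMap.range f) < T.card) :
    ∃ x ∈ LinearMap.ker f, x ≠ 0 ∧ support x ⊆ T := by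
  classical
  let ext := ExtendByZero.linearMap K ((↑) : T → ι)
  have hext : Injective ext := extend_injective Subtype.val_injective (0 : ι → K)
  have hrange : finrank K (LinearMap.range (f ∘ₗ ext)) ≤ finrank K (LinearMap.range f) :=
    Submodule.finrank_mono (LinearMap.range_comp_le_range _ _)
  have hker : LinearMap.ker (f ∘ₗ ext) ≠ ⊥ := by
    have := (f ∘ₗ ext).finrank_range_add_finrank_ker
    rw [finrank_fintype_fun_eq_card, Fintype.card_coe] at this
    rw [Ne, ← Submodule.finrank_eq_zero]
    omega
  obtain ⟨y, hy, hy0⟩ := Submodule.exists_mem_ne_zero_of_ne_bot hker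
  refine ⟨ext y, hy, (map_ne_zero_iff ext hext).mpr hy0, fun i hi => ?_⟩
  by_contra hiT
  exact hi (extend_apply' _ _ _ fun ⟨j, hj⟩ => hiT (hj ▸ j.2))

theorem exists_isConformal_sub_smul {n : ℕ} {d d' : Fin n → ℝ} (hd' : d' ≠ 0)
    (hsupp : support d' ⊆ support d) :
    ∃ t : ℝ, ∃ j ∈ support d', (d - t • d') j = 0 ∧ IsConformal (d - t • d') d := by
  classical
  -- `t = d j / d' j` is the ratio of least modulus, so `t • d'` is dominated by `d` coordinatewise.
  obtain ⟨j, hj, hmin⟩ := (Finset.univ.filter (d' · ≠ 0)).exists_min_image (fun i => |d i / d' i|)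
    (by simpa [Finset.filter_nonempty_iff, funext_iff] using hd')
  have hj : d' j ≠ 0 := (Finset.mem_filter.mp hj).2
  set t := d j / d' j
  have hbound : ∀ i, |t * d' i| ≤ |d i| := by
    intro i
    by_cases hi : d' i = 0
    · simp [hi]
    · calc |t * d' i| = |t| * |d' i| := abs_mul _ _
        _ ≤ |d i / d' i| * |d' i| :=
          mul_le_mul_of_nonneg_right (hmin i (by simp [hi])) (abs_nonneg _)
        _ = |d i| := by rw [abs_div, div_mul_cancel₀ _ (abs_ne_zero.mpr hi)]
  refine ⟨t, j, hj, by simp [t, hj], fun i hi => ?_, fun i => ?_⟩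
  · by_contra hdi
    have hd'i : d' i = 0 := not_not.mp fun h => hdi (hsupp h)
    exact hi (by simp [not_not.mp hdi, hd'i])
  · have : d i * (t * d' i) ≤ d i * d i :=
      calc d i * (t * d' i) ≤ |d i| * |t * d' i| := by rw [← abs_mul]; exact le_abs_self _
        _ ≤ |d i| * |d i| := mul_le_mul_of_nonneg_left (hbound i) (abs_nonneg _)
        _ = d i * d i := abs_mul_abs_self _
    simp only [Pi.sub_apply, Pi.smul_apply, smul_eq_mul, mul_sub]
    linarith

theorem IsElementary.not_support_ssubset {n : ℕ} {S : Submodule ℝ (Fin n → ℝ)}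
    {d d' : Fin n → ℝ} (hd : IsElementary S d) (hd'S : d' ∈ S) (hd' : d' ≠ 0) :
    ¬support d' ⊂ support d := by
  rintro ⟨hsub, hnsup⟩
  obtain ⟨hdS, -, hmin⟩ := hd
  obtain ⟨t, j, hj, hej, hconf⟩ := exists_isConformal_sub_smul hd' hsub
  obtain ⟨k, hk, hk'⟩ := Set.not_subset.mp hnsup
  have he0 : d - t • d' ≠ 0 := fun h => hk (by simpa [notMem_support.mp hk'] using congrFun h k)
  exact hmin ⟨d - t • d', S.sub_mem hdS (S.smul_mem t hd'S), he0, hconf,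
    hconf.1, fun h => h (hsub hj) hej⟩

/-- an elementary vector `d` of the null space of a real `m × n` matrix
`A` satisfies `supp(d) ≤ rank(A) + 1`. -/
theorem stmt_10 {m n : ℕ} (A : Matrix (Fin m) (Fin n) ℝ) (d : Fin n → ℝ)
    (hd : IsElementary (LinearMap.ker A.mulVecLin) d) :
    {i | d i ≠ 0}.ncard ≤ A.rank + 1 := by
  classical
  by_contra! hlt
  obtain ⟨i₀, hi₀⟩ := Function.ne_iff.mp hd.2.1
  let T := (support d).toFinset.erase i₀
  have hT : A.rank < T.card := by
    rw [Finset.card_erase_of_mem (by simpa using hi₀), ← Set.ncard_eq_toFinset_card']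
    exact Nat.lt_sub_of_add_lt hlt
  obtain ⟨x, hx, hx0, hxT⟩ := A.mulVecLin.exists_ne_zero_mem_ker_support_subset T hT
  have hxd : support x ⊆ support d := fun i hi => by simpa using Finset.mem_of_mem_erase (hxT hi)
  have hi₀x : i₀ ∉ support x := fun hi => by simpa [T] using hxT hi
  exact hd.not_support_ssubset hx hx0 ((Set.ssubset_iff_of_subset hxd).mpr ⟨i₀, hi₀, hi₀x⟩)
end

section
/- Let S be a subspace of ℝ^n and let d ∈ S be non-zero. Then either d is an elementary vector of S, or there exists an elementary vector d' ∈ S that is conformal to d. -/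
lemma isConformal_trans {n : ℕ} {a b c : Fin n → ℝ} (h1 : IsConformal a b)
    (h2 : IsConformal b c) : IsConformal a c := by
  obtain ⟨s1, p1⟩ := h1
  obtain ⟨s2, p2⟩ := h2
  refine ⟨s1.trans s2, fun i => ?_⟩
  by_cases hb : b i = 0
  · have ha : a i = 0 := by by_contra h; exact (s1 h) hb
    simp [ha]
  · have key : c i * a i = (c i * b i) * (b i * a i) / (b i ^ 2) := by
      field_simp
    rw [key]
    exact div_nonneg (mul_nonneg (p2 i) (p1 i)) (by positivity)

/-- every non-zero `d` in a subspace `S` of `ℝⁿ` is either an elementary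
vector of `S`, or there exists an elementary vector `d' ∈ S` conformal to `d`. -/
theorem stmt_11 {n : ℕ} (S : Submodule ℝ (Fin n → ℝ)) (d : Fin n → ℝ)
    (hd : d ∈ S) (hd0 : d ≠ 0) :
    IsElementary S d ∨ ∃ d' : Fin n → ℝ, d' ∈ S ∧ IsElementary S d' ∧ IsConformal d' d := by
  right
  suffices h : ∀ k : ℕ, ∀ d : Fin n → ℝ, d ∈ S → d ≠ 0 →
      ({i | d i ≠ 0} : Set (Fin n)).ncard = k →
      ∃ d', d' ∈ S ∧ IsElementary S d' ∧ IsConformal d' d from h _ d hd hd0 rfl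
  intro k
  induction k using Nat.strong_induction_on with
  | _ k ih =>
    intro d hd hd0 hcard
    by_cases he : IsElementary S d
    · exact ⟨d, hd, he, Set.Subset.rfl, fun i => mul_self_nonneg _⟩
    · rw [IsElementary] at he
      push_neg at he
      obtain ⟨d'', hd''S, hd''0, hconf, hss⟩ := he hd hd0
      have hlt : ({i | d'' i ≠ 0} : Set (Fin n)).ncard < k := by
        rw [← hcard]
        exact Set.ncard_lt_ncard hss (Set.toFinite _)
      obtain ⟨e, heS, heE, heC⟩ := ih _ hlt d'' hd''S hd''0 rfl
      exact ⟨e, heS, heE, isConformal_trans heC hconf⟩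
end

section
/- Let h : ℝ^n → ℝ ∪ {+∞} be convex and coordinate-wise separable, i.e. h(x) = Σ_i h_i(x_i) with each h_i convex. For any x and x + d in the effective domain of h, if d = d₁ + ⋯ + d_s for some s ≥ 1 with each non-zero d_t conformal to d, then h(x + d) − h(x) ≥ Σ_{t=1}^{s} (h(x + d_t) − h(x)). -/
/-- One-dimensional key lemma. -/
lemma oned_key (f : ℝ → ℝ) (hf : ConvexOn ℝ Set.univ f) (a : ℝ) (s : ℕ) (c : Fin s → ℝ)
    (hsign : ∀ t, 0 ≤ (∑ t', c t') * c t)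
    (hsupp : ∀ t, c t ≠ 0 → (∑ t', c t') ≠ 0) :
    ∑ t, (f (a + c t) - f a) ≤ f (a + ∑ t, c t) - f a := by
  set C := ∑ t', c t' with hC
  by_cases hC0 : C = 0
  · have hczero : ∀ t, c t = 0 := by
      intro t
      by_contra hne
      exact hsupp t hne hC0
    have h1 : ∑ t, (f (a + c t) - f a) = 0 := by
      apply Finset.sum_eq_zero
      intro t _
      rw [hczero t]
      simp
    rw [h1, hC0]
    simp
  · -- each c t / C ∈ [0,1]
    have hnonneg : ∀ t, 0 ≤ c t / C := by
      intro t
      have : c t / C = C * c t / (C * C) := by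
        field_simp
      rw [this]
      exact div_nonneg (hsign t) (mul_self_nonneg C)
    have hsum1 : ∑ t, c t / C = 1 := by
      rw [← Finset.sum_div]
      exact div_self hC0
    have hle1 : ∀ t, c t / C ≤ 1 := by
      intro t
      rw [← hsum1]
      exact Finset.single_le_sum (fun t' _ => hnonneg t') (Finset.mem_univ t)
    have key : ∀ t, f (a + c t) - f a ≤ (c t / C) * (f (a + C) - f a) := by
      intro t
      have hmem : a ∈ (Set.univ : Set ℝ) := Set.mem_univ _
      have hmem' : a + C ∈ (Set.univ : Set ℝ) := Set.mem_univ _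
      have h1 : (1 - c t / C) + c t / C = 1 := by ring
      have := hf.2 hmem hmem' (by linarith [hle1 t]) (hnonneg t) h1
      have heq : (1 - c t / C) • a + (c t / C) • (a + C) = a + c t := by
        simp only [smul_eq_mul]
        field_simp
        ring
      rw [heq] at this
      simp only [smul_eq_mul] at this
      nlinarith [this]
    calc ∑ t, (f (a + c t) - f a) ≤ ∑ t, (c t / C) * (f (a + C) - f a) :=
          Finset.sum_le_sum (fun t _ => key t)
      _ = (∑ t, c t / C) * (f (a + C) - f a) := by rw [Finset.sum_mul]
      _ = f (a + C) - f a := by rw [hsum1]; ring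

/-- for a convex coordinate-wise separable function
`H(x) = Σ_i h_i(x_i)`, if `d = d₁ + ⋯ + d_s` with each non-zero `d_t` conformal to `d`,
then `H(x + d) − H(x) ≥ Σ_t (H(x + d_t) − H(x))`. -/
theorem stmt_12 {n : ℕ} (h : Fin n → ℝ → ℝ)
    (hconv : ∀ i, ConvexOn ℝ Set.univ (h i))
    (H : (Fin n → ℝ) → ℝ) (hH : H = fun x => ∑ i, h i (x i))
    (x : Fin n → ℝ) (s : ℕ) (hs : 1 ≤ s) (d : Fin s → Fin n → ℝ)
    (hconf : ∀ t, d t ≠ 0 ∧ IsConformal (d t) (∑ t', d t')) :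
    H (x + ∑ t, d t) - H x ≥ ∑ t, (H (x + d t) - H x) := by
  subst hH
  simp only [Pi.add_apply, ge_iff_le]
  have hsum_apply : ∀ i, (∑ t, d t) i = ∑ t, d t i := by
    intro i
    simp [Finset.sum_apply]
  calc ∑ t, ((∑ i, h i (x i + d t i)) - ∑ i, h i (x i))
      = ∑ t, ∑ i, (h i (x i + d t i) - h i (x i)) := by
        congr 1; ext t; rw [Finset.sum_sub_distrib]
    _ = ∑ i, ∑ t, (h i (x i + d t i) - h i (x i)) := Finset.sum_comm
    _ ≤ ∑ i, (h i (x i + ∑ t, d t i) - h i (x i)) := by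
        apply Finset.sum_le_sum
        intro i _
        apply oned_key (h i) (hconv i) (x i) s (fun t => d t i)
        · intro t
          have := (hconf t).2.2 i
          rwa [hsum_apply i] at this
        · intro t hne
          have hmem : i ∈ {j | d t j ≠ 0} := hne
          have := (hconf t).2.1 hmem
          simp only [Set.mem_setOf_eq] at this
          rwa [hsum_apply i] at this
    _ = (∑ i, h i (x i + (∑ t, d t) i)) - ∑ i, h i (x i) := by
        rw [← Finset.sum_sub_distrib]
        congr 1; ext i; rw [hsum_apply i]
end

section
/- Consider minimizing F(x) = f(x) + h(x) over x ∈ ℝ^n subject to Ax = c, where A ∈ ℝ^{m×n} has full row rank, f is differentiable with ∇f being τ-coordinate Lipschitz with constant L₂ (meaning f(x + d) ≤ f(x) + ⟨∇f(x), d⟩ + (L₂/2)‖d‖₂² for all feasible x and all d with at most τ non-zero entries and Ad = 0), h is convex and coordinate-wise separable, and F satisfies the proximal-PL inequality in the 2-norm with constant μ₂. Fix a block size τ ≥ m + 1. Then block-coordinate descent, where at iteration k the block b^k of τ coordinates and the update d*_{b^k} are chosen jointly to minimize ⟨∇_{b^k} f(x^k), d_{b^k}⟩ + (L₂/2)‖d_{b^k}‖₂²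 + h_{b^k}(x^k_{b^k} + d_{b^k}) − h_{b^k}(x^k_{b^k}) over blocks b and directions d_b with A·U_b(d_b) = 0 (the GS-q rule), and x^{k+1} = x^k + U_{b^k}(d*_{b^k}), satisfies F(x^k) − F* ≤ (1 − μ₂/(L₂(n − τ + 1)))^k (F(x^0) − F*). -/
/-!
Let `P` be the value of the GS-q step, i.e. the least value of the proximal model
`⟨∇f(x), d⟩ + (L₂/2)‖d‖² + h(x + d) − h(x)` over null directions `d` of `A` with at most `τ` nonzero
entries. The τ-coordinate Lipschitz inequality gives the descent `F(x⁺) ≤ F(x) + P`.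

For the matching lower bound, every null direction `d` is a sum of at most `n − τ + 1` null
directions with at most `τ` nonzero entries, each conformal to `d` (coordinatewise of the sign of
`d`): since `τ > m`, any `τ` columns of `A` are dependent, which yields a conformal sparse null
vector `z`, and subtracting the largest multiple of `z` that keeps `d` conformal kills a coordinate.
Along a conformal sum the model is superadditive (its linear part is additive, and each coordinate
of each piece is a convex combination of `0` and `d i`), so `(n − τ + 1) P` lies below the model
at every null direction. The proximal-PL inequality then gives
`μ₂ (F(x) − F*) ≤ −L₂ (n − τ + 1) P`, hence the contraction factor `1 − μ₂ / (L₂ (n − τ + 1))`.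
-/

open Finset Matrix Function

theorem Matrix.exists_ne_zero_mulVec_eq_zero_support_subset {K κ ι : Type*} [Field K]
    [Fintype κ] [Fintype ι] (A : Matrix κ ι K) {S : Set ι} (hS : Fintype.card κ < S.ncard) :
    ∃ z, z ≠ 0 ∧ A *ᵥ z = 0 ∧ support z ⊆ S := by
  classical
  set g := A.mulVecLin ∘ₗ ExtendByZero.linearMap K (Subtype.val : S → ι)
  have hker : LinearMap.ker g ≠ ⊥ := LinearMap.ker_ne_bot_of_finrank_lt <| by
    rwa [Module.finrank_pi, Module.finrank_pi, Fintype.card_eq_nat_card,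
      Fintype.card_eq_nat_card, Nat.card_coe_set_eq, Nat.card_eq_fintype_card]
  obtain ⟨v, hv, hv0⟩ := (Submodule.ne_bot_iff _).mp hker
  refine ⟨extend Subtype.val v 0, fun hz => hv0 (funext fun i => ?_), hv, fun i hi => ?_⟩
  · simpa [Subtype.val_injective.extend_apply] using congrFun hz i
  · by_contra hiS
    exact hi (extend_apply' _ _ _ fun ⟨j, hj⟩ => hiS (hj ▸ j.2))

section Conformal

variable {ι 𝕜 : Type*} [Field 𝕜] [LinearOrder 𝕜]

def ConformsTo (e d : ι → 𝕜) : Prop :=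
  ∀ i, 0 ≤ e i * d i ∧ (d i = 0 → e i = 0)

namespace ConformsTo

variable {e d v : ι → 𝕜}

theorem refl [IsStrictOrderedRing 𝕜] (d : ι → 𝕜) : ConformsTo d d :=
  fun _ => ⟨mul_self_nonneg _, id⟩

theorem trans [IsStrictOrderedRing 𝕜] (hev : ConformsTo e v) (hvd : ConformsTo v d) :
    ConformsTo e d := by
  intro i
  by_cases hdi : d i = 0
  · simp [hdi, (hev i).2 ((hvd i).2 hdi)]
  refine ⟨?_, fun h => absurd h hdi⟩
  by_cases hvi : v i = 0
  · simp [(hev i).2 hvi]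
  -- `e i` has the sign of `v i`, which has the sign of `d i`
  have := mul_nonneg (hev i).1 (hvd i).1
  have hv2 : 0 < v i * v i := mul_self_pos.mpr hvi
  nlinarith

theorem smul [IsStrictOrderedRing 𝕜] (hed : ConformsTo e d) {c : 𝕜} (hc : 0 ≤ c) :
    ConformsTo (c • e) d := fun i =>
  ⟨by simpa [mul_assoc] using mul_nonneg hc (hed i).1, fun h => by simp [(hed i).2 h]⟩

theorem support_subset (hed : ConformsTo e d) : support e ⊆ support d :=
  fun i hei hdi => hei ((hed i).2 hdi)

theorem mul_pos_of_ne_zero (hed : ConformsTo e d) {i : ι} (hei : e i ≠ 0) : 0 < e i * d i :=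
  (hed i).1.lt_of_ne' (mul_ne_zero hei (hed.support_subset hei))

end ConformsTo

/-- Ratio test: moving from `d` against `w` by the largest step that keeps the sign pattern of `d`
kills a coordinate of `d`. -/
theorem exists_sub_smul_conformsTo [IsStrictOrderedRing 𝕜] [Fintype ι] {d w : ι → 𝕜}
    (hw : support w ⊆ support d) (hpos : ∃ i, 0 < w i * d i) :
    ∃ α : 𝕜, 0 < α ∧ ConformsTo (d - α • w) d ∧ support (d - α • w) ⊂ support d := by
  classical
  set T := univ.filter fun i => 0 < w i * d i
  obtain ⟨i₀, hi₀T, hmin⟩ := T.exists_min_image (fun i => d i / w i)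
    (by obtain ⟨i, hi⟩ := hpos; exact ⟨i, by simpa [T] using hi⟩)
  have hi₀ : 0 < w i₀ * d i₀ := by simpa [T] using hi₀T
  have hw₀ : w i₀ ≠ 0 := left_ne_zero_of_mul hi₀.ne'
  have hd₀ : d i₀ ≠ 0 := right_ne_zero_of_mul hi₀.ne'
  set α := d i₀ / w i₀
  have hα : 0 < α := by
    rw [show α = _ from (mul_div_mul_left (d i₀) (w i₀) hw₀).symm]
    exact div_pos hi₀ (mul_self_pos.mpr hw₀)
  have hconf : ConformsTo (d - α • w) d := by
    intro i
    simp only [Pi.sub_apply, Pi.smul_apply, smul_eq_mul]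
    refine ⟨?_, fun hdi => by simp [hdi, not_ne_iff.mp fun hwi => hw hwi hdi]⟩
    by_cases hiT : 0 < w i * d i
    · have hwi : w i ≠ 0 := left_ne_zero_of_mul hiT.ne'
      have hle : α * (w i * d i) ≤ d i / w i * (w i * d i) :=
        mul_le_mul_of_nonneg_right (hmin i (by simpa [T] using hiT)) hiT.le
      rw [show d i / w i * (w i * d i) = d i * d i by field_simp] at hle
      nlinarith
    · nlinarith [mul_self_nonneg (d i)]
  refine ⟨α, hα, hconf, hconf.support_subset.ssubset_of_ne fun h => ?_⟩
  have : i₀ ∈ support (d - α • w) := h ▸ hd₀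
  exact this (by simp [α, div_mul_cancel₀ _ hw₀])

end Conformal

namespace Matrix

variable {κ ι 𝕜 : Type*} [Fintype κ] [Fintype ι] [Field 𝕜] [LinearOrder 𝕜]
  [IsStrictOrderedRing 𝕜]

theorem exists_conformsTo_mulVec_eq_zero_ncard_support_le (A : Matrix κ ι 𝕜) {τ : ℕ}
    (hτ : Fintype.card κ < τ) {d : ι → 𝕜} (hd : A *ᵥ d = 0) (hd0 : d ≠ 0) :
    ∃ z, z ≠ 0 ∧ A *ᵥ z = 0 ∧ ConformsTo z d ∧ (support z).ncard ≤ τ := by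
  by_cases! hsmall : (support d).ncard ≤ τ
  · exact ⟨d, hd0, hd, .refl d, hsmall⟩
  obtain ⟨S, hSd, hScard⟩ := Set.exists_subset_card_eq hsmall.le
  obtain ⟨w, hw0, hwA, hwS⟩ := A.exists_ne_zero_mulVec_eq_zero_support_subset (hScard ▸ hτ)
  obtain ⟨i, hwi⟩ := Function.ne_iff.mp hw0
  obtain ⟨v, hvA, hvS, hpos⟩ : ∃ v, A *ᵥ v = 0 ∧ support v ⊆ S ∧ 0 < v i * d i := by
    rcases (mul_ne_zero hwi (hwS.trans hSd hwi)).lt_or_gt with h | h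
    · exact ⟨-w, by simp [mulVec_neg, hwA], by simpa using hwS, by simpa using h⟩
    · exact ⟨w, hwA, hwS, h⟩
  obtain ⟨α, -, hconf, hsub⟩ := exists_sub_smul_conformsTo (hvS.trans hSd) ⟨i, hpos⟩
  have hd'0 : d - α • v ≠ 0 := by
    intro h
    have : support d ⊆ S := by
      rw [sub_eq_zero.mp h]
      exact (support_smul_subset_right _ _).trans hvS
    have := Set.ncard_le_ncard this
    omega
  obtain ⟨z, hz0, hzA, hzconf, hzcard⟩ := exists_conformsTo_mulVec_eq_zero_ncard_support_le A hτ
    (by simp [mulVec_sub, mulVec_smul, hd, hvA]) hd'0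
  exact ⟨z, hz0, hzA, hzconf.trans hconf, hzcard⟩
termination_by (support d).ncard
decreasing_by exact Set.ncard_lt_ncard hsub

theorem exists_conformal_decomposition (A : Matrix κ ι 𝕜) {τ : ℕ} (hτ : Fintype.card κ < τ)
    {d : ι → 𝕜} (hd : A *ᵥ d = 0) :
    ∃ (s : ℕ) (e : Fin s → ι → 𝕜), ∑ j, e j = d ∧
      (∀ j, A *ᵥ e j = 0 ∧ ConformsTo (e j) d ∧ (support (e j)).ncard ≤ τ) ∧
      s + τ ≤ max (support d).ncard τ + 1 := by
  by_cases! hsmall : (support d).ncard ≤ τ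
  · exact ⟨1, fun _ => d, by simp, fun _ => ⟨hd, .refl d, hsmall⟩, by omega⟩
  have hd0 : d ≠ 0 := by rintro rfl; simp at hsmall
  obtain ⟨z, hz0, hzA, hzd, hzcard⟩ :=
    A.exists_conformsTo_mulVec_eq_zero_ncard_support_le hτ hd hd0
  obtain ⟨i, hzi⟩ := Function.ne_iff.mp hz0
  obtain ⟨α, hα, hconf, hsub⟩ :=
    exists_sub_smul_conformsTo hzd.support_subset ⟨i, hzd.mul_pos_of_ne_zero hzi⟩
  obtain ⟨s, e, hsum, he, hs⟩ := exists_conformal_decomposition A hτ (d := d - α • z)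
    (by simp [mulVec_sub, mulVec_smul, hd, hzA])
  refine ⟨s + 1, Fin.cons (α • z) e, by simp [Fin.sum_cons, hsum], fun j => ?_, ?_⟩
  · refine Fin.cases ?_ (fun j => ?_) j
    · exact ⟨by simp [mulVec_smul, hzA], hzd.smul hα.le,
        (Set.ncard_le_ncard (support_smul_subset_right _ _)).trans hzcard⟩
    · exact ⟨(he j).1, (he j).2.1.trans hconf, (he j).2.2⟩
  · have := Set.ncard_lt_ncard hsub
    omega
termination_by (support d).ncard
decreasing_by exact Set.ncard_lt_ncard hsub

end Matrix

section Convex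

variable {ι κ 𝕜 E : Type*} [Field 𝕜] [LinearOrder 𝕜] [IsStrictOrderedRing 𝕜]

theorem ConvexOn.sum_map_smul_le [AddCommGroup E] [Module 𝕜 E] {ψ : E → 𝕜}
    (hψ : ConvexOn 𝕜 Set.univ ψ) (hψ0 : ψ 0 = 0) {s : Finset κ} {w : κ → 𝕜}
    (hw : ∀ j ∈ s, 0 ≤ w j) (hsum : ∑ j ∈ s, w j = 1) (v : E) :
    ∑ j ∈ s, ψ (w j • v) ≤ ψ v := by
  have hle : ∀ j ∈ s, ψ (w j • v) ≤ w j * ψ v := fun j hj => by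
    have hw1 : w j ≤ 1 := hsum ▸ single_le_sum hw hj
    simpa [hψ0] using hψ.2 (Set.mem_univ 0) (Set.mem_univ v) (sub_nonneg.mpr hw1) (hw j hj)
      (sub_add_cancel 1 (w j))
  calc ∑ j ∈ s, ψ (w j • v) ≤ ∑ j ∈ s, w j * ψ v := sum_le_sum hle
    _ = ψ v := by rw [← sum_mul, hsum, one_mul]

/-- Coordinatewise, a conformal decomposition `d = ∑ eⱼ` writes each `eⱼ i` as the multiple
`eⱼ i / d i ∈ [0, 1]` of `d i`. -/
theorem ConvexOn.sum_map_apply_le_of_conformsTo {ψ : 𝕜 → 𝕜} (hψ : ConvexOn 𝕜 Set.univ ψ)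
    (hψ0 : ψ 0 = 0) {s : Finset κ} {e : κ → ι → 𝕜} {d : ι → 𝕜}
    (he : ∀ j ∈ s, ConformsTo (e j) d) (hsum : ∑ j ∈ s, e j = d) (i : ι) :
    ∑ j ∈ s, ψ (e j i) ≤ ψ (d i) := by
  by_cases hdi : d i = 0
  · rw [hdi, hψ0, sum_eq_zero fun j hj => by rw [(he j hj i).2 hdi, hψ0]]
  have hw : ∀ j ∈ s, 0 ≤ e j i / d i := fun j hj => by
    rw [← mul_div_mul_right (e j i) (d i) hdi]
    exact div_nonneg (he j hj i).1 (mul_self_nonneg _)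
  have hsum' : ∑ j ∈ s, e j i / d i = 1 := by
    rw [← sum_div, ← Finset.sum_apply, hsum, div_self hdi]
  have := hψ.sum_map_smul_le hψ0 hw hsum' (d i)
  simpa [div_mul_cancel₀ _ hdi] using this

end Convex

section ProxModel

variable {ι κ : Type*} [Fintype ι] (g : (ι → ℝ) →L[ℝ] ℝ) {L : ℝ} {h : ι → ℝ → ℝ} (x : ι → ℝ)

/-- The objective of the GS-q rule and of the proximal-PL inequality, with `g` in the role
of `∇f(x)`. -/
noncomputable def proxModel (g : (ι → ℝ) →L[ℝ] ℝ) (L : ℝ) (h : ι → ℝ → ℝ) (x d : ι → ℝ) : ℝ :=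
  g d + L / 2 * ∑ i, d i ^ 2 + ((∑ i, h i (x i + d i)) - ∑ i, h i (x i))

theorem proxModel_zero : proxModel g L h x 0 = 0 := by
  simp [proxModel]

theorem proxModel_eq_add_sum (d : ι → ℝ) :
    proxModel g L h x d = g d + ∑ i, (L / 2 * d i ^ 2 + (h i (x i + d i) - h i (x i))) := by
  rw [proxModel, sum_add_distrib, sum_sub_distrib, mul_sum, add_assoc]

theorem sum_proxModel_le_of_conformsTo (hL : 0 ≤ L) (hh : ∀ i, ConvexOn ℝ Set.univ (h i))
    {s : Finset κ} {e : κ → ι → ℝ} {d : ι → ℝ} (he : ∀ j ∈ s, ConformsTo (e j) d)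
    (hsum : ∑ j ∈ s, e j = d) :
    ∑ j ∈ s, proxModel g L h x (e j) ≤ proxModel g L h x d := by
  have hψ : ∀ i, ConvexOn ℝ Set.univ fun t => L / 2 * t ^ 2 + (h i (x i + t) - h i (x i)) :=
    fun i => by
      have hsq : ConvexOn ℝ Set.univ fun t : ℝ => L / 2 * t ^ 2 :=
        even_two.convexOn_pow.smul (by positivity)
      have hinc : ConvexOn ℝ Set.univ fun t => h i (x i + t) - h i (x i) := by
        simpa [sub_eq_add_neg, comp_def, Pi.add_def] using
          ((hh i).translate_right (x i)).add_const (-h i (x i))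
      exact hsq.add hinc
  calc ∑ j ∈ s, proxModel g L h x (e j)
      = g d + ∑ i, ∑ j ∈ s, (L / 2 * e j i ^ 2 + (h i (x i + e j i) - h i (x i))) := by
        simp only [proxModel_eq_add_sum]
        rw [sum_add_distrib, ← map_sum, hsum, sum_comm]
    _ ≤ g d + ∑ i, (L / 2 * d i ^ 2 + (h i (x i + d i) - h i (x i))) := by
        gcongr with i
        exact (hψ i).sum_map_apply_le_of_conformsTo (by simp) he hsum i
    _ = proxModel g L h x d := (proxModel_eq_add_sum g x d).symm

theorem mul_le_proxModel_of_forall_sparse [Fintype κ] {A : Matrix κ ι ℝ} {τ : ℕ}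
    (hκτ : Fintype.card κ < τ) (hτι : τ ≤ Fintype.card ι) (hL : 0 ≤ L)
    (hh : ∀ i, ConvexOn ℝ Set.univ (h i)) {P : ℝ}
    (hP : ∀ e, A *ᵥ e = 0 → (support e).ncard ≤ τ → P ≤ proxModel g L h x e)
    {d : ι → ℝ} (hd : A *ᵥ d = 0) :
    ((Fintype.card ι : ℝ) - τ + 1) * P ≤ proxModel g L h x d := by
  obtain ⟨s, e, hsum, he, hs⟩ := A.exists_conformal_decomposition hκτ hd
  have hP0 : P ≤ 0 := proxModel_zero g x ▸ hP 0 (mulVec_zero A) (by simp)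
  have hsN : (s : ℝ) ≤ (Fintype.card ι : ℝ) - τ + 1 := by
    have := Set.ncard_le_card (support d)
    rw [Nat.card_eq_fintype_card] at this
    have : ((s + τ : ℕ) : ℝ) ≤ (Fintype.card ι + 1 : ℕ) := by exact_mod_cast (by omega)
    push_cast at this
    linarith
  calc ((Fintype.card ι : ℝ) - τ + 1) * P ≤ s * P := mul_le_mul_of_nonpos_right hsN hP0
    _ = ∑ j, P := by simp
    _ ≤ ∑ j, proxModel g L h x (e j) := sum_le_sum fun j _ => hP (e j) (he j).1 (he j).2.2
    _ ≤ proxModel g L h x d :=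
      sum_proxModel_le_of_conformsTo g x hL hh (fun j _ => (he j).2.1) hsum

theorem sum_sub_eq_of_forall_notMem_eq_zero {b : Finset ι} {v : ι → ℝ}
    (hv : ∀ i ∉ b, v i = 0) :
    ∑ i ∈ b, (h i (x i + v i) - h i (x i)) = (∑ i, h i (x i + v i)) - ∑ i, h i (x i) := by
  rw [← sum_sub_distrib]
  exact sum_subset (subset_univ b) fun i _ hi => by simp [hv i hi]

theorem proxModel_le_of_forall_block [Fintype κ] {A : Matrix κ ι ℝ} {τ : ℕ}
    (hτι : τ ≤ Fintype.card ι) {b : Finset ι} {d : ι → ℝ} (hdb : ∀ i ∉ b, d i = 0)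
    (hmin : ∀ (b' : Finset ι) (e : ι → ℝ), b'.card = τ → (∀ i ∉ b', e i = 0) → A *ᵥ e = 0 →
      g d + L / 2 * ∑ i, d i ^ 2 + ∑ i ∈ b, (h i (x i + d i) - h i (x i)) ≤
        g e + L / 2 * ∑ i, e i ^ 2 + ∑ i ∈ b', (h i (x i + e i) - h i (x i)))
    {e : ι → ℝ} (heA : A *ᵥ e = 0) (heτ : (support e).ncard ≤ τ) :
    proxModel g L h x d ≤ proxModel g L h x e := by
  classical
  obtain ⟨b', hsub, -, hb'τ⟩ := exists_subsuperset_card_eq (n := τ)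
    (subset_univ (support e).toFinset) (by rwa [← Set.ncard_eq_toFinset_card'])
    (by simpa using hτι)
  have heb' : ∀ i ∉ b', e i = 0 := fun i hi =>
    by_contra fun hei => hi (hsub (by simpa using hei))
  have := hmin b' e hb'τ heb' heA
  rwa [sum_sub_eq_of_forall_notMem_eq_zero x hdb, sum_sub_eq_of_forall_notMem_eq_zero x heb']
    at this

theorem add_sum_le_add_proxModel {f : (ι → ℝ) → ℝ} {d : ι → ℝ}
    (hf : f (x + d) ≤ f x + g d + L / 2 * ∑ i, d i ^ 2) :
    f (x + d) + ∑ i, h i ((x + d) i) ≤ f x + ∑ i, h i (x i) + proxModel g L h x d := by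
  simp only [proxModel, Pi.add_apply]
  linarith

end ProxModel

theorem le_pow_mul_of_le_mul {R : Type*} [CommRing R] [LinearOrder R] [IsStrictOrderedRing R]
    {a : ℕ → R} {r : R} (ha : ∀ k, 0 ≤ a k) (hstep : ∀ k, a (k + 1) ≤ r * a k) (k : ℕ) :
    a k ≤ r ^ k * a 0 := by
  by_cases! hr : 0 ≤ r
  · induction k with
    | zero => simp
    | succ k ih =>
      calc a (k + 1) ≤ r * a k := hstep k
        _ ≤ r * (r ^ k * a 0) := mul_le_mul_of_nonneg_left ih hr
        _ = r ^ (k + 1) * a 0 := by ring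
  · -- a negative ratio forces `a 0 = a 1 = ⋯ = 0`
    have ha0 : a 0 = 0 := by nlinarith [ha 0, ha 1, hstep 0]
    cases k with
    | zero => simp
    | succ k =>
      rw [ha0, mul_zero]
      nlinarith [hstep k, ha k]

theorem stmt_13_general {m n τ : ℕ} (hτm : m + 1 ≤ τ) (hτn : τ ≤ n)
    (A : Matrix (Fin m) (Fin n) ℝ) (c : Fin m → ℝ)
    (f : (Fin n → ℝ) → ℝ)
    (h : Fin n → ℝ → ℝ) (hconv : ∀ i, ConvexOn ℝ Set.univ (h i))
    (F : (Fin n → ℝ) → ℝ) (hF : F = fun x => f x + ∑ i, h i (x i))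
    (L₂ μ₂ : ℝ) (hL₂ : 0 < L₂) (hμ₂ : 0 < μ₂)
    -- ∇f is τ-coordinate Lipschitz with constant L₂ on the feasible set
    (hLip : ∀ x : Fin n → ℝ, A.mulVec x = c → ∀ d : Fin n → ℝ,
      {i | d i ≠ 0}.ncard ≤ τ → A.mulVec d = 0 →
      f (x + d) ≤ f x + fderiv ℝ f x d + L₂ / 2 * ∑ i, (d i) ^ 2)
    (Fstar : ℝ) (hFstar : IsGLB (F '' {x | A.mulVec x = c}) Fstar)
    -- proximal-PL inequality in the 2-norm
    (hPL : ∀ x : Fin n → ℝ, A.mulVec x = c →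
      F x - Fstar ≤ -(L₂ / μ₂) * sInf {v | ∃ d : Fin n → ℝ, A.mulVec d = 0 ∧
        v = fderiv ℝ f x d + L₂ / 2 * ∑ i, (d i) ^ 2 +
          ((∑ i, h i (x i + d i)) - ∑ i, h i (x i))})
    -- the iterates: x^{k+1} = x^k + U_{b^k}(d*_{b^k}) with (b^k, d^k) chosen by GS-q
    (x : ℕ → Fin n → ℝ) (hx0 : A.mulVec (x 0) = c)
    (d : ℕ → Fin n → ℝ) (hiter : ∀ k, x (k + 1) = x k + d k)
    (hGSq : ∀ k, ∃ b : Finset (Fin n), b.card = τ ∧ (∀ i ∉ b, d k i = 0) ∧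
      A.mulVec (d k) = 0 ∧
      ∀ (b' : Finset (Fin n)) (e : Fin n → ℝ), b'.card = τ → (∀ i ∉ b', e i = 0) →
        A.mulVec e = 0 →
        fderiv ℝ f (x k) (d k) + L₂ / 2 * ∑ i, (d k i) ^ 2 +
            ∑ i ∈ b, (h i (x k i + d k i) - h i (x k i)) ≤
          fderiv ℝ f (x k) e + L₂ / 2 * ∑ i, (e i) ^ 2 +
            ∑ i ∈ b', (h i (x k i + e i) - h i (x k i))) :
    ∀ k, F (x k) - Fstar ≤
      (1 - μ₂ / (L₂ * ((n : ℝ) - τ + 1))) ^ k * (F (x 0) - Fstar) := by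
  have hfeas : ∀ k, A *ᵥ x k = c := fun k => by
    induction k with
    | zero => exact hx0
    | succ k ih =>
      obtain ⟨-, -, -, hdA, -⟩ := hGSq k
      rw [hiter, mulVec_add, ih, hdA, add_zero]
  refine le_pow_mul_of_le_mul (fun k => sub_nonneg.mpr (hFstar.1 ⟨x k, hfeas k, rfl⟩))
    fun k => ?_
  obtain ⟨b, hbτ, hdb, hdA, hGSqk⟩ := hGSq k
  set P := proxModel (fderiv ℝ f (x k)) L₂ h (x k) (d k)
  set N : ℝ := (n : ℝ) - τ + 1
  have hN : 0 < N := by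
    have : (τ : ℝ) ≤ n := by exact_mod_cast hτn
    linarith
  have hinf : N * P ≤ sInf {v | ∃ e : Fin n → ℝ, A *ᵥ e = 0 ∧
      v = proxModel (fderiv ℝ f (x k)) L₂ h (x k) e} := by
    refine le_csInf ⟨0, 0, mulVec_zero A, (proxModel_zero _ _).symm⟩ ?_
    rintro _ ⟨e, heA, rfl⟩
    simpa [N] using mul_le_proxModel_of_forall_sparse _ (x k) (by simpa using hτm)
      (by simpa using hτn) hL₂.le hconv
      (fun _ => proxModel_le_of_forall_block _ (x k) (by simpa using hτn) hdb hGSqk) heA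
  have hdesc : F (x (k + 1)) ≤ F (x k) + P := by
    have hdτ : {i | d k i ≠ 0}.ncard ≤ τ := hbτ ▸ Set.ncard_coe_finset b ▸
      Set.ncard_le_ncard fun i hi => by_contra fun hib => hi (hdb i hib)
    simpa only [hF, hiter, add_assoc] using
      add_sum_le_add_proxModel _ (x k) (hLip (x k) (hfeas k) (d k) hdτ hdA)
  have hPL' : μ₂ / (L₂ * N) * (F (x k) - Fstar) ≤ -P :=
    calc μ₂ / (L₂ * N) * (F (x k) - Fstar)
        ≤ μ₂ / (L₂ * N) * (-(L₂ / μ₂) * (N * P)) := by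
          gcongr
          exact (hPL (x k) (hfeas k)).trans
            (mul_le_mul_of_nonpos_left hinf (neg_nonpos.mpr (by positivity)))
      _ = -P := by field_simp
  linarith

/-- linear convergence of block-coordinate descent with the GS-q rule,
block size `τ ≥ m + 1`, for `F = f + h` with `h` convex and coordinate-wise separable,
linear constraints `Ax = c` (`A` of full row rank), `∇f` τ-coordinate Lipschitz with
constant `L₂`, and `F` satisfying the proximal-PL inequality in the 2-norm with
constant `μ₂`:  `F(x^k) − F* ≤ (1 − μ₂/(L₂(n − τ + 1)))^k (F(x^0) − F*)`. -/
theorem stmt_13 {m n τ : ℕ} (hτm : m + 1 ≤ τ) (hτn : τ ≤ n)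
    (A : Matrix (Fin m) (Fin n) ℝ) (hA : A.rank = m) (c : Fin m → ℝ)
    (f : (Fin n → ℝ) → ℝ) (hf : Differentiable ℝ f)
    (h : Fin n → ℝ → ℝ) (hconv : ∀ i, ConvexOn ℝ Set.univ (h i))
    (F : (Fin n → ℝ) → ℝ) (hF : F = fun x => f x + ∑ i, h i (x i))
    (L₂ μ₂ : ℝ) (hL₂ : 0 < L₂) (hμ₂ : 0 < μ₂)
    -- ∇f is τ-coordinate Lipschitz with constant L₂ on the feasible set
    (hLip : ∀ x : Fin n → ℝ, A.mulVec x = c → ∀ d : Fin n → ℝ,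
      {i | d i ≠ 0}.ncard ≤ τ → A.mulVec d = 0 →
      f (x + d) ≤ f x + fderiv ℝ f x d + L₂ / 2 * ∑ i, (d i) ^ 2)
    (Fstar : ℝ) (hFstar : IsGLB (F '' {x | A.mulVec x = c}) Fstar)
    -- proximal-PL inequality in the 2-norm
    (hPL : ∀ x : Fin n → ℝ, A.mulVec x = c →
      F x - Fstar ≤ -(L₂ / μ₂) * sInf {v | ∃ d : Fin n → ℝ, A.mulVec d = 0 ∧
        v = fderiv ℝ f x d + L₂ / 2 * ∑ i, (d i) ^ 2 +
          ((∑ i, h i (x i + d i)) - ∑ i, h i (x i))})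
    -- the iterates: x^{k+1} = x^k + U_{b^k}(d*_{b^k}) with (b^k, d^k) chosen by GS-q
    (x : ℕ → Fin n → ℝ) (hx0 : A.mulVec (x 0) = c)
    (d : ℕ → Fin n → ℝ) (hiter : ∀ k, x (k + 1) = x k + d k)
    (hGSq : ∀ k, ∃ b : Finset (Fin n), b.card = τ ∧ (∀ i ∉ b, d k i = 0) ∧
      A.mulVec (d k) = 0 ∧
      ∀ (b' : Finset (Fin n)) (e : Fin n → ℝ), b'.card = τ → (∀ i ∉ b', e i = 0) →
        A.mulVec e = 0 →
        fderiv ℝ f (x k) (d k) + L₂ / 2 * ∑ i, (d k i) ^ 2 +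
            ∑ i ∈ b, (h i (x k i + d k i) - h i (x k i)) ≤
          fderiv ℝ f (x k) e + L₂ / 2 * ∑ i, (e i) ^ 2 +
            ∑ i ∈ b', (h i (x k i + e i) - h i (x k i))) :
    ∀ k, F (x k) - Fstar ≤
      (1 - μ₂ / (L₂ * ((n : ℝ) - τ + 1))) ^ k * (F (x 0) - Fstar) :=
  stmt_13_general hτm hτn A c f h hconv F hF L₂ μ₂ hL₂ hμ₂ hLip Fstar hFstar hPL x hx0 d hiter hGSq
end

section
/- Let f : ℝ^n → ℝ be differentiable, α > 0, and L₁, …, L_n > 0. Define the weighted norm ‖d‖_L = Σ_i √(L_i)|d_i|. Then at least one steepest-descent direction with respect to the L-norm has exactly two non-zero coordinates; that is, min over d ∈ ℝ^n with ⟨d, 1⟩ = 0 of ∇f(x)ᵀd + (1/(2α))‖d‖_L² equals the minimum over pairs (i, j) of the minimum over d_{ij} ∈ ℝ² with d_i + d_j = 0 of ∇_{ij}f(x)ᵀd_{ij} + (1/(2α))‖d_{ij}‖_L². A minimizer is supported on a pair (i, j) maximizing (∇_i f(x) − ∇_j f(x))/(√(L_i) + √(L_j)), with d_i = −δ, d_j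 = δ where δ = (α/(√(L_i) + √(L_j))²)(∇_i f(x) − ∇_j f(x)). -/
/-!
Write `s k = √(L k)` and let `M` be the largest ratio `(g a - g b) / (s a + s b)`, so that
`g a - g b ≤ M (s a + s b)` for all `a, b`. Then some constant `c` has `|g k - c| ≤ M s k` for
every `k`, and for a zero-sum direction `e` this gives `⟨g, e⟩ = ⟨g - c, e⟩ ≥ -M ‖e‖_L`.
Minimising `-M t + t² / (2α)` over `t` bounds the objective below by `-α M² / 2`, and the
two-coordinate direction `d` attains this value.
-/

open Finset

section

variable {ι : Type*} [Fintype ι]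

noncomputable def descentObjective (g s : ι → ℝ) (α : ℝ) (e : ι → ℝ) : ℝ :=
  ∑ k, g k * e k + 1 / (2 * α) * (∑ k, s k * |e k|) ^ 2

lemma exists_abs_sub_le_mul {g s : ι → ℝ} {M : ℝ}
    (hg : ∀ a b, g a - g b ≤ M * (s a + s b)) : ∃ c, ∀ k, |g k - c| ≤ M * s k := by
  refine ⟨⨆ k, (g k - M * s k), fun k => abs_sub_le_iff.2 ⟨?_, ?_⟩⟩
  · have := le_ciSup (Finite.bddAbove_range fun k => g k - M * s k) k
    linarith
  · have : Nonempty ι := ⟨k⟩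
    have := ciSup_le fun a => show g a - M * s a ≤ g k + M * s k by linarith [hg a k]
    linarith

lemma neg_mul_sum_abs_le_sum_mul {g s e : ι → ℝ} {M : ℝ}
    (hg : ∀ a b, g a - g b ≤ M * (s a + s b)) (he : ∑ k, e k = 0) :
    -(M * ∑ k, s k * |e k|) ≤ ∑ k, g k * e k := by
  obtain ⟨c, hc⟩ := exists_abs_sub_le_mul hg
  have hshift : ∑ k, (g k - c) * e k = ∑ k, g k * e k := by
    simp only [sub_mul, sum_sub_distrib, ← mul_sum, he, mul_zero, sub_zero]
  have hterm (k : ι) : -(M * (s k * |e k|)) ≤ (g k - c) * e k :=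
    calc -(M * (s k * |e k|)) = -(M * s k * |e k|) := by ring
      _ ≤ -(|g k - c| * |e k|) := neg_le_neg (by gcongr; exact hc k)
      _ ≤ (g k - c) * e k := by rw [← abs_mul]; exact neg_abs_le _
  calc -(M * ∑ k, s k * |e k|) = ∑ k, -(M * (s k * |e k|)) := by
        rw [mul_sum, sum_neg_distrib]
    _ ≤ ∑ k, (g k - c) * e k := sum_le_sum fun k _ => hterm k
    _ = ∑ k, g k * e k := hshift

lemma neg_mul_sq_div_two_le_descentObjective {g s e : ι → ℝ} {α M : ℝ} (hα : 0 < α)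
    (hg : ∀ a b, g a - g b ≤ M * (s a + s b)) (he : ∑ k, e k = 0) :
    -(α * M ^ 2) / 2 ≤ descentObjective g s α e := by
  have hlin := neg_mul_sum_abs_le_sum_mul hg he
  set t := ∑ k, s k * |e k|
  have hquad : -(α * M ^ 2) / 2 ≤ -(M * t) + 1 / (2 * α) * t ^ 2 := by
    have : 1 / (2 * α) * t ^ 2 = (t - α * M) ^ 2 / (2 * α) + M * t - α * M ^ 2 / 2 := by
      field_simp; ring
    rw [this]
    have : 0 ≤ (t - α * M) ^ 2 / (2 * α) := by positivity
    linarith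
  unfold descentObjective
  linarith

section TwoPoint

variable [DecidableEq ι]

lemma sum_mul_single_add_single (h : ι → ℝ) (a b : ι) (c c' : ℝ) :
    ∑ k, h k * (Pi.single a c + Pi.single b c' : ι → ℝ) k = h a * c + h b * c' := by
  simp [mul_add, sum_add_distrib, Pi.single_apply, mul_ite]

lemma sum_mul_abs_single_add_single_le {s : ι → ℝ} (hs : ∀ k, 0 ≤ s k) (a b : ι) (c c' : ℝ) :
    ∑ k, s k * |(Pi.single a c + Pi.single b c' : ι → ℝ) k| ≤ s a * |c| + s b * |c'| := by
  have hsingle (a : ι) (c : ℝ) : ∑ k, s k * |(Pi.single a c : ι → ℝ) k| = s a * |c| := by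
    simp [Pi.single_apply, apply_ite abs, mul_ite]
  calc ∑ k, s k * |(Pi.single a c + Pi.single b c' : ι → ℝ) k|
      ≤ ∑ k, (s k * |(Pi.single a c : ι → ℝ) k| + s k * |(Pi.single b c' : ι → ℝ) k|) := by
        gcongr with k
        rw [← mul_add]
        exact mul_le_mul_of_nonneg_left (abs_add_le _ _) (hs k)
    _ = s a * |c| + s b * |c'| := by rw [sum_add_distrib, hsingle, hsingle]

lemma descentObjective_single_add_single_le {g s : ι → ℝ} {α : ℝ} (hα : 0 < α)
    (hs : ∀ k, 0 ≤ s k) (a b : ι) (c c' : ℝ) :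
    descentObjective g s α (Pi.single a c + Pi.single b c') ≤
      g a * c + g b * c' + 1 / (2 * α) * (s a * |c| + s b * |c'|) ^ 2 := by
  unfold descentObjective
  rw [sum_mul_single_add_single]
  gcongr
  · exact sum_nonneg fun k _ => mul_nonneg (hs k) (abs_nonneg _)
  · exact sum_mul_abs_single_add_single_le hs a b c c'

end TwoPoint

end

lemma two_point_objective_eq {gi gj si sj α δ : ℝ} (hα : α ≠ 0) (hs : si + sj ≠ 0)
    (hδ : δ = α / (si + sj) ^ 2 * (gi - gj)) :
    gi * -δ + gj * δ + 1 / (2 * α) * (si * |-δ| + sj * |δ|) ^ 2 =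
      -(α * ((gi - gj) / (si + sj)) ^ 2) / 2 := by
  rw [abs_neg, ← add_mul, mul_pow, sq_abs, hδ]
  field_simp
  ring

theorem stmt_18_general {n : ℕ} (α : ℝ) (hα : 0 < α)
    (g : Fin n → ℝ)
    (L : Fin n → ℝ) (hL : ∀ i, 0 < L i)
    (i j : Fin n)
    (hij : ∀ a b : Fin n, (g a - g b) / (Real.sqrt (L a) + Real.sqrt (L b)) ≤
      (g i - g j) / (Real.sqrt (L i) + Real.sqrt (L j)))
    (δ : ℝ) (hδ : δ = α / (Real.sqrt (L i) + Real.sqrt (L j)) ^ 2 * (g i - g j))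
    (d : Fin n → ℝ) (hd : d = Pi.single i (-δ) + Pi.single j δ) :
    (∑ k, d k = 0) ∧
    (∀ e : Fin n → ℝ, ∑ k, e k = 0 →
      (∑ k, g k * d k) + 1 / (2 * α) * (∑ k, Real.sqrt (L k) * |d k|) ^ 2 ≤
        (∑ k, g k * e k) + 1 / (2 * α) * (∑ k, Real.sqrt (L k) * |e k|) ^ 2) ∧
    (∀ a b : Fin n, ∀ e : ℝ,
      (∑ k, g k * d k) + 1 / (2 * α) * (∑ k, Real.sqrt (L k) * |d k|) ^ 2 ≤
        g a * e + g b * (-e) +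
          1 / (2 * α) * (Real.sqrt (L a) * |e| + Real.sqrt (L b) * |(-e)|) ^ 2) := by
  set s : Fin n → ℝ := fun k => Real.sqrt (L k)
  have hs : ∀ k, 0 ≤ s k := fun k => Real.sqrt_nonneg _
  have hs_pair : ∀ a b, 0 < s a + s b := fun a b =>
    add_pos (Real.sqrt_pos.2 (hL a)) (Real.sqrt_pos.2 (hL b))
  set M := (g i - g j) / (s i + s j)
  have hM : ∀ a b, g a - g b ≤ M * (s a + s b) := fun a b => by
    rw [← div_le_iff₀ (hs_pair a b)]
    exact hij a b
  have hd_le : descentObjective g s α d ≤ -(α * M ^ 2) / 2 := by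
    rw [hd, ← two_point_objective_eq hα.ne' (hs_pair i j).ne' hδ]
    exact descentObjective_single_add_single_le hα hs i j _ _
  refine ⟨by simp [hd, sum_add_distrib],
    fun e he => hd_le.trans (neg_mul_sq_div_two_le_descentObjective hα hM he),
    fun a b e => hd_le.trans ?_⟩
  calc -(α * M ^ 2) / 2 ≤ descentObjective g s α (Pi.single a e + Pi.single b (-e)) :=
        neg_mul_sq_div_two_le_descentObjective hα hM (by simp [sum_add_distrib])
    _ ≤ _ := descentObjective_single_add_single_le hα hs a b e (-e)

/-- steepest descent in the weighted norm `‖d‖_L = Σ_i √(L_i)|d_i|` over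
zero-sum directions admits a minimizer with (at most) two non-zero coordinates,
supported on a pair `(i, j)` maximizing `(∇_i f(x) − ∇_j f(x))/(√L_i + √L_j)`, with
`d_i = −δ`, `d_j = δ` where `δ = (α/(√L_i + √L_j)²)(∇_i f(x) − ∇_j f(x))`.  The vector
`d` is feasible, it globally minimizes the full steepest-descent objective, and its
objective value is a lower bound for the 2-coordinate objectives over all pairs (hence
the two minima coincide). -/
theorem stmt_18 {n : ℕ} (f : (Fin n → ℝ) → ℝ) (x : Fin n → ℝ)
    (hf : DifferentiableAt ℝ f x) (α : ℝ) (hα : 0 < α)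
    (g : Fin n → ℝ) (hg : ∀ i, g i = fderiv ℝ f x (Pi.single i 1))
    (L : Fin n → ℝ) (hL : ∀ i, 0 < L i)
    (i j : Fin n)
    (hij : ∀ a b : Fin n, (g a - g b) / (Real.sqrt (L a) + Real.sqrt (L b)) ≤
      (g i - g j) / (Real.sqrt (L i) + Real.sqrt (L j)))
    (δ : ℝ) (hδ : δ = α / (Real.sqrt (L i) + Real.sqrt (L j)) ^ 2 * (g i - g j))
    (d : Fin n → ℝ) (hd : d = Pi.single i (-δ) + Pi.single j δ) :
    (∑ k, d k = 0) ∧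
    (∀ e : Fin n → ℝ, ∑ k, e k = 0 →
      (∑ k, g k * d k) + 1 / (2 * α) * (∑ k, Real.sqrt (L k) * |d k|) ^ 2 ≤
        (∑ k, g k * e k) + 1 / (2 * α) * (∑ k, Real.sqrt (L k) * |e k|) ^ 2) ∧
    (∀ a b : Fin n, ∀ e : ℝ,
      (∑ k, g k * d k) + 1 / (2 * α) * (∑ k, Real.sqrt (L k) * |d k|) ^ 2 ≤
        g a * e + g b * (-e) +
          1 / (2 * α) * (Real.sqrt (L a) * |e| + Real.sqrt (L b) * |(-e)|) ^ 2) :=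
  stmt_18_general α hα g L hL i j hij δ hδ d hd
end

section
/- Let f : ℝ^n → ℝ be differentiable and Lipschitz smooth in the L-norm with constant L_L on the set {x : ⟨x, 1⟩ = γ}, i.e. f(x + d) ≤ f(x) + ⟨∇f(x), d⟩ + (L_L/2)‖d‖_L² for all feasible x and all d with ⟨d, 1⟩ = 0. Suppose f satisfies the proximal-PL inequality in the L-norm: (1/2)D(x, L_L) ≥ μ_L(f(x) − f*) for all feasible x and some μ_L > 0, where D(x, L) = −2L·min over y with ⟨y, 1⟩ = γ of {⟨∇f(x), y − x⟩ + (L/2)‖y − x‖_L²}. Then the iterates x^{k+1} = x^k + d^k, where d^k minimizes ⟨∇f(x^k), d⟩ + (L_L/2)‖d‖_L² over d with ⟨d, 1⟩ = 0 (equivalently, the greedy 2-coordinate update from the L-norm steepest descent with step size 1/L_L), satisfy f(x^k) − f* ≤ (1 − μ_L/L_L)^k (f(x^0) − f*). -/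
/-- linear convergence of steepest descent in the weighted norm
`‖d‖_L = Σ_i √(L_i)|d_i|` for minimizing `f` subject to `Σ_i x_i = γ`, when `f` is
Lipschitz smooth in the L-norm with constant `L_L` on the constraint set and satisfies
the proximal-PL inequality in the L-norm, `(1/2)D(x, L_L) ≥ μ_L(f(x) − f*)`.  The
iterates `x^{k+1} = x^k + d^k`, where `d^k` minimizes
`⟨∇f(x^k), d⟩ + (L_L/2)‖d‖_L²` over zero-sum `d`, satisfy
`f(x^k) − f* ≤ (1 − μ_L/L_L)^k (f(x^0) − f*)`. -/
theorem stmt_19 {n : ℕ} (γ : ℝ) (f : (Fin n → ℝ) → ℝ) (hf : Differentiable ℝ f)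
    (L : Fin n → ℝ) (hL : ∀ i, 0 < L i)
    (LL μL : ℝ) (hLL : 0 < LL) (hμL : 0 < μL)
    -- f is Lipschitz smooth in the L-norm with constant L_L on the constraint set
    (hsmooth : ∀ x : Fin n → ℝ, (∑ i, x i) = γ → ∀ d : Fin n → ℝ, (∑ i, d i) = 0 →
      f (x + d) ≤ f x + fderiv ℝ f x d + LL / 2 * (∑ i, Real.sqrt (L i) * |d i|) ^ 2)
    (fstar : ℝ) (hfstar : IsGLB (f '' {x | (∑ i, x i) = γ}) fstar)
    (D : (Fin n → ℝ) → ℝ → ℝ)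
    (hD : ∀ y c, D y c = -2 * c * sInf {v | ∃ z : Fin n → ℝ, (∑ i, z i) = γ ∧
      v = fderiv ℝ f y (z - y) + c / 2 * (∑ i, Real.sqrt (L i) * |z i - y i|) ^ 2})
    -- proximal-PL inequality in the L-norm
    (hPL : ∀ y : Fin n → ℝ, (∑ i, y i) = γ → μL * (f y - fstar) ≤ 1 / 2 * D y LL)
    -- iterates of L-norm steepest descent with step size 1/L_L
    (x d : ℕ → Fin n → ℝ) (hx0 : (∑ i, x 0 i) = γ)
    (hd : ∀ k, (∑ i, d k i) = 0 ∧ ∀ e : Fin n → ℝ, (∑ i, e i) = 0 →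
      fderiv ℝ f (x k) (d k) + LL / 2 * (∑ i, Real.sqrt (L i) * |d k i|) ^ 2 ≤
        fderiv ℝ f (x k) e + LL / 2 * (∑ i, Real.sqrt (L i) * |e i|) ^ 2)
    (hiter : ∀ k, x (k + 1) = x k + d k) :
    ∀ k, f (x k) - fstar ≤ (1 - μL / LL) ^ k * (f (x 0) - fstar) := by
  -- Feasibility of iterates
  have hfeas : ∀ k, (∑ i, x k i) = γ := by
    intro k
    induction k with
    | zero => exact hx0
    | succ k ih =>
      rw [hiter k]
      simp only [Pi.add_apply, Finset.sum_add_distrib, ih, (hd k).1, add_zero]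
  have hpos : ∀ k, 0 ≤ f (x k) - fstar := by
    intro k
    have : fstar ≤ f (x k) := hfstar.1 ⟨x k, hfeas k, rfl⟩
    linarith
  -- the value of D at the iterates
  have hT : ∀ k, D (x k) LL = -2 * LL *
      (fderiv ℝ f (x k) (d k) + LL / 2 * (∑ i, Real.sqrt (L i) * |d k i|) ^ 2) := by
    intro k
    rw [hD]
    congr 1
    have hmem : (fderiv ℝ f (x k) (d k) + LL / 2 * (∑ i, Real.sqrt (L i) * |d k i|) ^ 2)
        ∈ {v | ∃ z : Fin n → ℝ, (∑ i, z i) = γ ∧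
          v = fderiv ℝ f (x k) (z - x k) + LL / 2 * (∑ i, Real.sqrt (L i) * |z i - x k i|) ^ 2} := by
      refine ⟨x k + d k, ?_, ?_⟩
      · simp [Finset.sum_add_distrib, hfeas k, (hd k).1]
      · simp
    have hlb : ∀ v ∈ {v | ∃ z : Fin n → ℝ, (∑ i, z i) = γ ∧
          v = fderiv ℝ f (x k) (z - x k) + LL / 2 * (∑ i, Real.sqrt (L i) * |z i - x k i|) ^ 2},
        (fderiv ℝ f (x k) (d k) + LL / 2 * (∑ i, Real.sqrt (L i) * |d k i|) ^ 2) ≤ v := by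
      rintro v ⟨z, hz, rfl⟩
      have hze : (∑ i, (z - x k) i) = 0 := by
        simp only [Pi.sub_apply, Finset.sum_sub_distrib, hz, hfeas k, sub_self]
      have := (hd k).2 (z - x k) hze
      simpa using this
    exact le_antisymm (csInf_le ⟨_, hlb⟩ hmem) (le_csInf ⟨_, hmem⟩ hlb)
  -- combine with PL inequality
  have hPLT : ∀ k, μL * (f (x k) - fstar) ≤
      -(LL * (fderiv ℝ f (x k) (d k) + LL / 2 * (∑ i, Real.sqrt (L i) * |d k i|) ^ 2)) := by
    intro k
    have h1 := hPL (x k) (hfeas k)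
    rw [hT k] at h1
    linarith
  -- descent: f(x(k+1)) ≤ f(x k) + T(d k)
  have hsm : ∀ k, f (x (k + 1)) ≤ f (x k) +
      (fderiv ℝ f (x k) (d k) + LL / 2 * (∑ i, Real.sqrt (L i) * |d k i|) ^ 2) := by
    intro k
    have := hsmooth (x k) (hfeas k) (d k) (hd k).1
    rw [← hiter k] at this
    linarith
  have hTge : ∀ k, -(f (x k) - fstar) ≤
      fderiv ℝ f (x k) (d k) + LL / 2 * (∑ i, Real.sqrt (L i) * |d k i|) ^ 2 := by
    intro k
    have h1 := hsm k
    have h2 := hpos (k + 1)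
    linarith
  have hkey : ∀ k, (μL - LL) * (f (x k) - fstar) ≤ 0 := by
    intro k
    have h1 := hPLT k
    have h2 := mul_le_mul_of_nonneg_left (hTge k) hLL.le
    linarith
  have hdesc : ∀ k, f (x (k + 1)) - fstar ≤ (1 - μL / LL) * (f (x k) - fstar) := by
    intro k
    have h1 := hPLT k
    have h2 := hsm k
    have hTle : fderiv ℝ f (x k) (d k) + LL / 2 * (∑ i, Real.sqrt (L i) * |d k i|) ^ 2
        ≤ -(μL * (f (x k) - fstar)) / LL := by
      rw [le_div_iff₀ hLL]
      nlinarith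
    have hexp : (1 - μL / LL) * (f (x k) - fstar)
        = (f (x k) - fstar) + -(μL * (f (x k) - fstar)) / LL := by
      field_simp
      ring
    rw [hexp]
    linarith
  intro k
  induction k with
  | zero => simp
  | succ k ih =>
    rcases le_or_gt 0 (1 - μL / LL) with hc0 | hc0
    · calc f (x (k + 1)) - fstar ≤ (1 - μL / LL) * (f (x k) - fstar) := hdesc k
        _ ≤ (1 - μL / LL) * ((1 - μL / LL) ^ k * (f (x 0) - fstar)) :=
            mul_le_mul_of_nonneg_left ih hc0
        _ = (1 - μL / LL) ^ (k + 1) * (f (x 0) - fstar) := by ring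
    · have hμ : LL < μL := by
        have : 1 < μL / LL := by linarith
        rw [lt_div_iff₀ hLL] at this
        linarith
      have hΔk : f (x k) - fstar = 0 := by
        have := hkey k
        have := hpos k
        nlinarith
      have hΔ0 : f (x 0) - fstar = 0 := by
        have := hkey 0
        have := hpos 0
        nlinarith
      have := hdesc k
      rw [hΔk] at this
      rw [hΔ0]
      simpa using this
end
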